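/- arXiv:2401.05786 — 6 statements merged into one kernel-verified Lean document; each statement's English description precedes it below -/
import Mathlib

section
/- Let F be a tree with bipartition A, B (|A| ≤ |B|), q = |A| - 1 ≥ 1, and suppose every vertex of A has degree at least 2 in F. Then the graph S_{n,q}^1, obtained from the join K_q ∇ (n-q)K_1 by adding one edge inside the independent set of size n-q, contains no subgraph isomorphic to F. -/
open SimpleGraph

open SimpleGraph

/-- `G` contains a subgraph isomorphic to `F`. -/
def Contains {α β : Type*} (F : SimpleGraph α) (G : SimpleGraph β) : Prop :=
  ∃ f : F →g G, Function.Injective f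

/-- The graph `S_{n,q}^p`: the join of a clique on `q` vertices with `n - q` independent
vertices, together with `p` independent edges (pairs `(2k, 2k+1)`, `k < p`) embedded
in the independent set. -/
def Snqp (n q p : ℕ) : SimpleGraph (Fin q ⊕ Fin (n - q)) where
  Adj v w := v ≠ w ∧ (v.isLeft ∨ w.isLeft ∨
    ∃ a b : Fin (n - q), v = Sum.inr a ∧ w = Sum.inr b ∧
      a.val / 2 = b.val / 2 ∧ a.val < 2 * p ∧ b.val < 2 * p)
  symm := by
    constructor
    rintro v w ⟨h1, h2⟩
    refine ⟨h1.symm, ?_⟩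
    rcases h2 with h | h | ⟨a, b, rfl, rfl, e, ha, hb⟩
    · exact Or.inr (Or.inl h)
    · exact Or.inl h
    · exact Or.inr (Or.inr ⟨b, a, rfl, rfl, e.symm, hb, ha⟩)
  loopless := by constructor; rintro v ⟨h1, -⟩; exact h1 rfl

lemma tree_edge_assign {V : Type*} [DecidableEq V] {F : SimpleGraph V} (hF : F.IsTree) (r : V) :
    ∃ g : V → V, ∀ x y, F.Adj x y →
      ∃ w, w ≠ r ∧ (w = x ∨ w = y) ∧ s(w, g w) = s(x, y) := by
  choose f hf hf' using fun v => hF.existsUnique_path v r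
  refine ⟨fun v => (f v).getVert 1, ?_⟩
  have aux : ∀ x y (h : F.Adj x y), (f x).length ≤ (f y).length →
      y ≠ r ∧ s(y, (f y).getVert 1) = s(x, y) := by
    intro x y h hlen
    have hynr : y ≠ r := by
      rintro rfl
      have h0 : Walk.nil = f y := hf' y Walk.nil Walk.IsPath.nil
      rw [← h0] at hlen
      simp only [Walk.length_nil, Nat.le_zero] at hlen
      exact h.ne (Walk.eq_of_length_eq_zero hlen)
    have hy : y ∉ (f x).support := by
      intro hy
      have ht : (f x).takeUntil y hy = Walk.cons h Walk.nil :=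
        ExistsUnique.unique (hF.existsUnique_path x y) ((hf x).takeUntil hy)
          ((Walk.cons_isPath_iff _ _).2 ⟨Walk.IsPath.nil, by simp [h.ne]⟩)
      have hd : (f x).dropUntil y hy = f y := hf' y _ ((hf x).dropUntil hy)
      have hl := congrArg Walk.length ((f x).take_spec hy)
      rw [Walk.length_append, ht, hd] at hl
      simp only [Walk.length_cons, Walk.length_nil] at hl
      omega
    have hW : (Walk.cons h.symm (f x)).IsPath := (Walk.cons_isPath_iff _ _).2 ⟨hf x, hy⟩
    have heq : Walk.cons h.symm (f x) = f y := hf' y _ hW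
    refine ⟨hynr, ?_⟩
    rw [← heq]
    simp [Sym2.eq_swap]
  intro x y h
  rcases le_total (f x).length (f y).length with hle | hle
  · obtain ⟨h1, h2⟩ := aux x y h hle; exact ⟨y, h1, Or.inr rfl, h2⟩
  · obtain ⟨h1, h2⟩ := aux y x h.symm hle
    exact ⟨x, h1, Or.inl rfl, h2.trans Sym2.eq_swap⟩

/-- If `F` is a tree with bipartition `A`, `B` (`|A| ≤ |B|`), `q = |A| - 1 ≥ 1`, and every
vertex of `A` has degree at least `2` in `F`, then `S_{n,q}^1` is `F`-free. -/
theorem stmt10 {V : Type*} [Fintype V] [DecidableEq V]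
    (F : SimpleGraph V) [DecidableRel F.Adj] (hF : F.IsTree)
    (A B : Finset V) (hdisj : Disjoint A B) (hcover : ∀ v, v ∈ A ∨ v ∈ B)
    (hindA : ∀ v ∈ A, ∀ w ∈ A, ¬F.Adj v w)
    (hindB : ∀ v ∈ B, ∀ w ∈ B, ¬F.Adj v w)
    (hAB : A.card ≤ B.card)
    (q : ℕ) (hq : 1 ≤ q) (hqA : q + 1 = A.card)
    (hδ : ∀ x ∈ A, 2 ≤ F.degree x)
    (n : ℕ) :
    ¬ Contains F (Snqp n q 1) := by
  rintro ⟨φ, hinj⟩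
  classical
  -- neighbors of A-vertices lie in B
  have hNB : ∀ a ∈ A, ∀ b, F.Adj a b → b ∈ B := by
    intro a ha b hab
    rcases hcover b with hb | hb
    · exact absurd hab (hindA a ha b hb)
    · exact hb
  -- extract the structure of a "right-right" adjacency
  have hRR : ∀ a b : V, F.Adj a b → ¬(φ a).isLeft → ¬(φ b).isLeft →
      ∃ x y : Fin (n - q), φ a = Sum.inr x ∧ φ b = Sum.inr y ∧
        x.val < 2 ∧ y.val < 2 ∧ x.val ≠ y.val := by
    intro a b hab hla hlb
    obtain ⟨x, hx⟩ : ∃ x, φ a = Sum.inr x := by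
      rcases h' : φ a with u | x
      · rw [h'] at hla; simp at hla
      · exact ⟨x, rfl⟩
    obtain ⟨y, hy⟩ : ∃ y, φ b = Sum.inr y := by
      rcases h' : φ b with u | y
      · rw [h'] at hlb; simp at hlb
      · exact ⟨y, rfl⟩
    have hadj : φ a ≠ φ b ∧ ((φ a).isLeft ∨ (φ b).isLeft ∨
        ∃ x' y' : Fin (n - q), φ a = Sum.inr x' ∧ φ b = Sum.inr y' ∧
          x'.val / 2 = y'.val / 2 ∧ x'.val < 2 * 1 ∧ y'.val < 2 * 1) := φ.map_adj hab
    obtain ⟨hne, hcase⟩ := hadj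
    rcases hcase with h | h | ⟨a', b', h1, h2, hdiv, ha2, hb2⟩
    · rw [hx] at h; simp at h
    · rw [hy] at h; simp at h
    · refine ⟨a', b', h1, h2, by omega, by omega, ?_⟩
      intro hv
      apply hne
      rw [h1, h2, Fin.val_injective hv]
  -- the partition pieces
  set A₁ := A.filter (fun a => (φ a).isLeft) with hA₁
  set A₂ := A.filter (fun a => ¬(φ a).isLeft) with hA₂
  set B₁ := B.filter (fun b => (φ b).isLeft) with hB₁
  have hA12 : A₁.card + A₂.card = A.card := Finset.card_filter_add_card_filter_not _
  -- left-mapped vertices: at most q of them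
  have hcardq : A₁.card + B₁.card ≤ q := by
    have hdisj' : Disjoint A₁ B₁ :=
      hdisj.mono (Finset.filter_subset _ _) (Finset.filter_subset _ _)
    rw [← Finset.card_union_of_disjoint hdisj']
    have : (Finset.univ : Finset (Fin q)).card = q := by simp
    rw [← this]
    apply Finset.card_le_card_of_injOn (fun v => ((φ v).getLeft?).getD ⟨0, hq⟩)
    · intro a _; exact Finset.mem_univ _
    · intro u hu v hv huv
      simp only [Finset.mem_coe, Finset.mem_union, hA₁, hB₁, Finset.mem_filter] at hu hv
      obtain ⟨xu, hxu⟩ : ∃ x, φ u = Sum.inl x := by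
        rcases h' : φ u with x | x
        · exact ⟨x, rfl⟩
        · rcases hu with ⟨_, h⟩ | ⟨_, h⟩ <;> (rw [h'] at h; simp at h)
      obtain ⟨xv, hxv⟩ : ∃ x, φ v = Sum.inl x := by
        rcases h' : φ v with x | x
        · exact ⟨x, rfl⟩
        · rcases hv with ⟨_, h⟩ | ⟨_, h⟩ <;> (rw [h'] at h; simp at h)
      simp only [hxu, hxv, Sum.getLeft?, Option.getD_some] at huv
      exact hinj (by rw [hxu, hxv, huv])
  have hA2pos : 1 ≤ A₂.card := by omega
  obtain ⟨r, hr⟩ := Finset.card_pos.mp (by omega : 0 < A₂.card)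
  obtain ⟨g, hg⟩ := tree_edge_assign hF r
  -- the edge-counting finset
  set P : Finset (V × V) :=
    A₂.biUnion (fun a => (B₁.filter (F.Adj a)).image (fun b => (a, b))) with hP
  have hmemP : ∀ p ∈ P, p.1 ∈ A₂ ∧ p.2 ∈ B₁ ∧ F.Adj p.1 p.2 := by
    intro p hp
    simp only [hP, Finset.mem_biUnion, Finset.mem_image, Finset.mem_filter] at hp
    obtain ⟨a, ha, b, ⟨hb, rfl⟩⟩ := hp
    exact ⟨ha, hb.1, hb.2⟩
  -- upper bound on P.card
  have hup : P.card + 1 ≤ A₂.card + B₁.card := by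
    have hdisj2 : Disjoint A₂ B₁ :=
      hdisj.mono (Finset.filter_subset _ _) (Finset.filter_subset _ _)
    have h1 : P.card ≤ ((A₂ ∪ B₁).erase r).card := by
      apply Finset.card_le_card_of_injOn
        (fun p => if h : F.Adj p.1 p.2 then (hg p.1 p.2 h).choose else r)
      · intro p hp
        obtain ⟨hp1, hp2, hadj⟩ := hmemP p hp
        simp only [dif_pos hadj]
        obtain ⟨hw1, hw2, _⟩ := (hg p.1 p.2 hadj).choose_spec
        refine Finset.mem_erase.mpr ⟨hw1, ?_⟩
        rcases hw2 with h | h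
        · exact Finset.mem_union_left _ (by rw [h]; exact hp1)
        · exact Finset.mem_union_right _ (by rw [h]; exact hp2)
      · intro p hp p' hp' hpp
        obtain ⟨hp1, hp2, hadj⟩ := hmemP p (Finset.mem_coe.mp hp)
        obtain ⟨hp1', hp2', hadj'⟩ := hmemP p' (Finset.mem_coe.mp hp')
        simp only [dif_pos hadj, dif_pos hadj'] at hpp
        obtain ⟨_, _, he⟩ := (hg p.1 p.2 hadj).choose_spec
        obtain ⟨_, _, he'⟩ := (hg p'.1 p'.2 hadj').choose_spec
        rw [hpp] at he
        have := he.symm.trans he'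
        rw [Sym2.eq_iff] at this
        rcases this with ⟨h1, h2⟩ | ⟨h1, h2⟩
        · exact Prod.ext h1 h2
        · exfalso
          exact Finset.disjoint_left.mp hdisj
            (Finset.filter_subset _ _ hp1)
            (Finset.filter_subset _ _ (h1 ▸ hp2'))
    have h2 : ((A₂ ∪ B₁).erase r).card + 1 = (A₂ ∪ B₁).card :=
      Finset.card_erase_add_one (Finset.mem_union_left _ hr)
    rw [Finset.card_union_of_disjoint hdisj2] at h2
    omega
  -- lower bound on P.card
  have hPcard : P.card = ∑ a ∈ A₂, (B₁.filter (F.Adj a)).card := by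
    rw [hP, Finset.card_biUnion]
    · apply Finset.sum_congr rfl
      intro a _
      exact Finset.card_image_of_injective _ (fun b b' h => (Prod.mk.injEq .. ▸ h).2)
    · intro a ha a' ha' haa
      simp only [Finset.disjoint_left, Finset.mem_image]
      rintro p ⟨b, _, rfl⟩ ⟨b', _, hb'⟩
      exact haa (Prod.mk.injEq .. ▸ hb').1.symm
  set ra : V → ℕ := fun a => ((F.neighborFinset a).filter (fun b => ¬(φ b).isLeft)).card with hra
  have hdeg : ∀ a ∈ A₂, 2 ≤ (B₁.filter (F.Adj a)).card + ra a := by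
    intro a ha
    have haA : a ∈ A := Finset.filter_subset _ _ ha
    have hd : ((F.neighborFinset a).filter (fun b => (φ b).isLeft)).card + ra a
        = F.degree a := by
      rw [hra, Finset.card_filter_add_card_filter_not]
      rfl
    have hsub : (F.neighborFinset a).filter (fun b => (φ b).isLeft)
        ⊆ B₁.filter (F.Adj a) := by
      intro b hb
      simp only [Finset.mem_filter, mem_neighborFinset] at hb
      refine Finset.mem_filter.mpr ⟨?_, hb.1⟩
      rw [hB₁]
      exact Finset.mem_filter.mpr ⟨hNB a haA b hb.1, hb.2⟩
    have := Finset.card_le_card hsub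
    have := hδ a haA
    omega
  have hra1 : ∀ a ∈ A₂, ra a ≤ 1 := by
    intro a ha
    apply Finset.card_le_one.mpr
    intro b hb b' hb'
    simp only [Finset.mem_filter, mem_neighborFinset] at hb hb'
    have hla : ¬(φ a).isLeft := (Finset.mem_filter.mp ha).2
    obtain ⟨x, y, hx, hy, hx2, hy2, hxy⟩ := hRR a b hb.1 hla hb.2
    obtain ⟨x', y', hx', hy', hx2', hy2', hxy'⟩ := hRR a b' hb'.1 hla hb'.2
    rw [hx] at hx'
    obtain rfl : x = x' := Sum.inr.injEq .. ▸ hx'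
    have : y.val = y'.val := by omega
    exact hinj (by rw [hy, hy', Fin.val_injective this])
  have honce : ∀ a ∈ A₂, ∀ a' ∈ A₂, 0 < ra a → 0 < ra a' → a = a' := by
    intro a ha a' ha' h0 h0'
    obtain ⟨b, hb⟩ := Finset.card_pos.mp h0
    obtain ⟨b', hb'⟩ := Finset.card_pos.mp h0'
    simp only [Finset.mem_filter, mem_neighborFinset] at hb hb'
    have hla : ¬(φ a).isLeft := (Finset.mem_filter.mp ha).2
    have hla' : ¬(φ a').isLeft := (Finset.mem_filter.mp ha').2
    obtain ⟨x, y, hx, hy, hx2, hy2, hxy⟩ := hRR a b hb.1 hla hb.2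
    obtain ⟨x', y', hx', hy', hx2', hy2', hxy'⟩ := hRR a' b' hb'.1 hla' hb'.2
    have : x'.val = x.val ∨ x'.val = y.val := by omega
    rcases this with h | h
    · exact (hinj (by rw [hx, hx', Fin.val_injective h])).symm
    · exfalso
      have : a' = b := hinj (by rw [hx', hy, Fin.val_injective h])
      have hbB : b ∈ B := hNB a (Finset.filter_subset _ _ ha) b hb.1
      exact Finset.disjoint_left.mp hdisj (Finset.filter_subset _ _ ha') (this ▸ hbB)
  -- sum of ra over A₂ is at most 1
  have hsumra : ∑ a ∈ A₂, ra a ≤ 1 := by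
    set T := A₂.filter (fun a => 0 < ra a) with hT
    have hT1 : T.card ≤ 1 := by
      apply Finset.card_le_one.mpr
      intro a ha a' ha'
      simp only [hT, Finset.mem_filter] at ha ha'
      exact honce a ha.1 a' ha'.1 ha.2 ha'.2
    have hTsum : ∑ a ∈ T, ra a = ∑ a ∈ A₂, ra a :=
      Finset.sum_filter_of_ne (fun x _ h => by omega)
    rw [← hTsum]
    calc ∑ a ∈ T, ra a ≤ ∑ a ∈ T, 1 := by
          apply Finset.sum_le_sum
          intro a ha
          exact hra1 a (Finset.filter_subset _ _ ha)
      _ = T.card := by simp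
      _ ≤ 1 := hT1
  have hlow : 2 * A₂.card ≤ P.card + 1 := by
    have : ∑ a ∈ A₂, 2 ≤ ∑ a ∈ A₂, ((B₁.filter (F.Adj a)).card + ra a) :=
      Finset.sum_le_sum hdeg
    rw [Finset.sum_add_distrib] at this
    rw [Finset.sum_const, smul_eq_mul] at this
    rw [hPcard]
    omega
  omega
end

section
/- Let F be a tree with bipartition A, B (|A| ≤ |B|), q = |A| - 1 ≥ 1, and suppose some vertex of A has degree 1 in F. Then the graph K_{q,n-q}^1, obtained from K_{q,n-q} by adding one edge inside the part of size n - q, contains a subgraph isomorphic to F, for all n ≥ |V(F)|. -/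
open SimpleGraph

/-- The graph `K_{q,m}^p`: the complete bipartite graph with parts of sizes `q` and `m`,
together with `p` independent edges (pairs `(2k, 2k+1)`, `k < p`) embedded in the part
of size `m`. -/
def Kqmp (q m p : ℕ) : SimpleGraph (Fin q ⊕ Fin m) where
  Adj v w := v ≠ w ∧ ((v.isLeft ∧ w.isRight) ∨ (w.isLeft ∧ v.isRight) ∨
    ∃ a b : Fin m, v = Sum.inr a ∧ w = Sum.inr b ∧
      a.val / 2 = b.val / 2 ∧ a.val < 2 * p ∧ b.val < 2 * p)
  symm := by
    constructor
    rintro v w ⟨h1, h2⟩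
    refine ⟨h1.symm, ?_⟩
    rcases h2 with h | h | ⟨a, b, rfl, rfl, e, ha, hb⟩
    · exact Or.inr (Or.inl h)
    · exact Or.inl h
    · exact Or.inr (Or.inr ⟨b, a, rfl, rfl, e.symm, hb, ha⟩)
  loopless := by constructor; rintro v ⟨h1, -⟩; exact h1 rfl

/-- If `F` is a tree with bipartition `A`, `B` (`|A| ≤ |B|`), `q = |A| - 1 ≥ 1`, and some
vertex of `A` has degree `1` in `F`, then `K_{q,n-q}^1` (one extra edge in the large part)
contains a copy of `F`, for all `n ≥ |V(F)|`. -/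
theorem stmt11 {V : Type*} [Fintype V] [DecidableEq V]
    (F : SimpleGraph V) [DecidableRel F.Adj] (hF : F.IsTree)
    (A B : Finset V) (hdisj : Disjoint A B) (hcover : ∀ v, v ∈ A ∨ v ∈ B)
    (hindA : ∀ v ∈ A, ∀ w ∈ A, ¬F.Adj v w)
    (hindB : ∀ v ∈ B, ∀ w ∈ B, ¬F.Adj v w)
    (hAB : A.card ≤ B.card)
    (q : ℕ) (hq : 1 ≤ q) (hqA : q + 1 = A.card)
    (hδ : ∃ x ∈ A, F.degree x = 1)
    (n : ℕ) (hn : Fintype.card V ≤ n) :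
    Contains F (Kqmp q (n - q) 1) := by
  classical
  obtain ⟨x, hxA, hdeg⟩ := hδ
  obtain ⟨y, hy⟩ := Finset.card_eq_one.mp hdeg
  have hxy : F.Adj x y := by
    have : y ∈ F.neighborFinset x := by rw [hy]; exact Finset.mem_singleton_self y
    exact (F.mem_neighborFinset x y).mp this
  have huniq : ∀ w, F.Adj x w → w = y := by
    intro w hw
    have : w ∈ F.neighborFinset x := (F.mem_neighborFinset x w).mpr hw
    rw [hy] at this
    exact Finset.mem_singleton.mp this
  have hyB : y ∈ B := (hcover y).resolve_left (fun h => hindA x hxA y h hxy)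
  have hxB : x ∉ B := Finset.disjoint_left.mp hdisj hxA
  have hyA : y ∉ A := Finset.disjoint_right.mp hdisj hyB
  have hxyne : x ≠ y := fun h => hxB (h ▸ hyB)
  -- cardinalities
  have hunion : A ∪ B = Finset.univ := by
    apply Finset.eq_univ_iff_forall.mpr
    intro v
    rcases hcover v with h | h
    · exact Finset.mem_union_left _ h
    · exact Finset.mem_union_right _ h
  have hcardV : A.card + B.card = Fintype.card V := by
    rw [← Finset.card_union_of_disjoint hdisj, hunion, Finset.card_univ]
  have hBcard : B.card + q + 1 ≤ n := by omega
  have hBge : 2 ≤ B.card := by omega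
  have hm2 : 2 ≤ n - q := by omega
  have hBy : (B.erase y).card + 2 ≤ n - q := by
    rw [Finset.card_erase_of_mem hyB]; omega
  -- embeddings
  have hAx : (A.erase x).card = q := by
    rw [Finset.card_erase_of_mem hxA]; omega
  let eA : (A.erase x : Finset V) ≃ Fin q := Finset.equivFinOfCardEq hAx
  obtain ⟨eB⟩ : Nonempty ((B.erase y : Finset V) ↪ Fin (n - q - 2)) := by
    apply Function.Embedding.nonempty_of_card_le
    rw [Fintype.card_coe, Fintype.card_fin]; omega
  -- the map
  let f : V → Fin q ⊕ Fin (n - q) := fun v =>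
    if h : v ∈ A.erase x then Sum.inl (eA ⟨v, h⟩)
    else if v = x then Sum.inr ⟨0, by omega⟩
    else if v = y then Sum.inr ⟨1, by omega⟩
    else if h' : v ∈ B.erase y then
      Sum.inr ⟨2 + (eB ⟨v, h'⟩).val, by have := (eB ⟨v, h'⟩).isLt; omega⟩
    else Sum.inr ⟨0, by omega⟩
  have hf1 : ∀ v (h : v ∈ A.erase x), f v = Sum.inl (eA ⟨v, h⟩) := by
    intro v h; simp only [f, dif_pos h]
  have hf2 : f x = Sum.inr ⟨0, by omega⟩ := by
    simp only [f, dif_neg (Finset.notMem_erase x A), if_pos rfl, if_true]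
  have hf3 : f y = Sum.inr ⟨1, by omega⟩ := by
    have h1 : y ∉ A.erase x := fun h => hyA (Finset.mem_of_mem_erase h)
    simp only [f, dif_neg h1, if_neg (Ne.symm hxyne), if_pos rfl, if_true]
  have hf4 : ∀ v (h : v ∈ B.erase y),
      f v = Sum.inr ⟨2 + (eB ⟨v, h⟩).val, by have := (eB ⟨v, h⟩).isLt; omega⟩ := by
    intro v h
    have hvB : v ∈ B := Finset.mem_of_mem_erase h
    have h1 : v ∉ A.erase x := fun h' =>
      Finset.disjoint_left.mp hdisj (Finset.mem_of_mem_erase h') hvB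
    have h2 : v ≠ x := fun h' => hxB (h' ▸ hvB)
    have h3 : v ≠ y := Finset.ne_of_mem_erase h
    simp only [f, dif_neg h1, if_neg h2, if_neg h3, dif_pos h]
  have hcases : ∀ v : V, v ∈ A.erase x ∨ v = x ∨ v = y ∨ v ∈ B.erase y := by
    intro v
    rcases hcover v with h | h
    · by_cases hv : v = x
      · exact Or.inr (Or.inl hv)
      · exact Or.inl (Finset.mem_erase.mpr ⟨hv, h⟩)
    · by_cases hv : v = y
      · exact Or.inr (Or.inr (Or.inl hv))
      · exact Or.inr (Or.inr (Or.inr (Finset.mem_erase.mpr ⟨hv, h⟩)))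
  -- adjacency helpers for Kqmp
  have kLR : ∀ (a : Fin q) (b : Fin (n - q)),
      (Kqmp q (n - q) 1).Adj (Sum.inl a) (Sum.inr b) := by
    intro a b
    exact ⟨by simp, Or.inl ⟨rfl, rfl⟩⟩
  have k01 : (Kqmp q (n - q) 1).Adj (Sum.inr ⟨0, by omega⟩) (Sum.inr ⟨1, by omega⟩) := by
    refine ⟨by simp [Fin.ext_iff], Or.inr (Or.inr ⟨⟨0, by omega⟩, ⟨1, by omega⟩,
      rfl, rfl, by norm_num, by norm_num, by norm_num⟩)⟩
  -- homomorphism property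
  have hhom : ∀ {v w : V}, F.Adj v w → (Kqmp q (n - q) 1).Adj (f v) (f w) := by
    intro v w hvw
    rcases hcases v with hv | hv | hv | hv
    · have hvA : v ∈ A := Finset.mem_of_mem_erase hv
      rw [hf1 v hv]
      rcases hcases w with hw | hw | hw | hw
      · exact absurd hvw (hindA v hvA w (Finset.mem_of_mem_erase hw))
      · exact absurd hvw (hindA v hvA w (hw ▸ hxA))
      · rw [hw, hf3]; exact kLR _ _
      · rw [hf4 w hw]; exact kLR _ _
    · subst hv
      have := huniq w hvw
      subst this
      rw [hf2, hf3]; exact k01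
    · subst hv
      rcases hcases w with hw | hw | hw | hw
      · rw [hf3, hf1 w hw]; exact (kLR _ _).symm
      · subst hw; rw [hf3, hf2]; exact k01.symm
      · subst hw; exact (F.irrefl hvw).elim
      · exact absurd hvw (hindB v hyB w (Finset.mem_of_mem_erase hw))
    · have hvB : v ∈ B := Finset.mem_of_mem_erase hv
      rw [hf4 v hv]
      rcases hcases w with hw | hw | hw | hw
      · rw [hf1 w hw]; exact (kLR _ _).symm
      · subst hw
        have := huniq v hvw.symm
        exact absurd this (Finset.ne_of_mem_erase hv)
      · exact absurd hvw (hindB v hvB w (hw ▸ hyB))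
      · exact absurd hvw (hindB v hvB w (Finset.mem_of_mem_erase hw))
  -- injectivity
  have hinj : Function.Injective f := by
    intro v w hvw
    rcases hcases v with hv | hv | hv | hv <;> rcases hcases w with hw | hw | hw | hw
    · rw [hf1 v hv, hf1 w hw] at hvw
      have := eA.injective (Sum.inl_injective hvw)
      exact Subtype.mk_eq_mk.mp this
    · rw [hf1 v hv, hw, hf2] at hvw; exact absurd hvw (by simp)
    · rw [hf1 v hv, hw, hf3] at hvw; exact absurd hvw (by simp)
    · rw [hf1 v hv, hf4 w hw] at hvw; exact absurd hvw (by simp)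
    · rw [hv, hf2, hf1 w hw] at hvw; exact absurd hvw (by simp)
    · rw [hv, hw]
    · rw [hv, hf2, hw, hf3] at hvw
      exact absurd hvw (by simp [Fin.ext_iff]; try omega)
    · rw [hv, hf2, hf4 w hw] at hvw
      exact absurd hvw (by simp [Fin.ext_iff]; try omega)
    · rw [hv, hf3, hf1 w hw] at hvw; exact absurd hvw (by simp)
    · rw [hv, hf3, hw, hf2] at hvw
      exact absurd hvw (by simp [Fin.ext_iff]; try omega)
    · rw [hv, hw]
    · rw [hv, hf3, hf4 w hw] at hvw
      exact absurd hvw (by simp [Fin.ext_iff]; try omega)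
    · rw [hf4 v hv, hf1 w hw] at hvw; exact absurd hvw (by simp)
    · rw [hf4 v hv, hw, hf2] at hvw
      exact absurd hvw (by simp [Fin.ext_iff]; try omega)
    · rw [hf4 v hv, hw, hf3] at hvw
      exact absurd hvw (by simp [Fin.ext_iff]; try omega)
    · rw [hf4 v hv, hf4 w hw] at hvw
      have h0 : (2 : ℕ) + (eB ⟨v, hv⟩).val = 2 + (eB ⟨w, hw⟩).val :=
        congrArg Fin.val (Sum.inr_injective hvw)
      have := eB.injective (Fin.ext (Nat.add_left_cancel h0))
      exact Subtype.mk_eq_mk.mp this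
  exact ⟨⟨f, hhom⟩, hinj⟩
end

section
/- Let F be a tree on ℓ vertices with bipartition A, B, |A| ≤ |B|, with β(F) = (ℓ-1)/2 and min degree over A at least 2, and set q = (ℓ-3)/2. Then the graph K_{q,n-q}^2, obtained from K_{q,n-q} by adding two independent edges inside the part of size n-q, contains a subgraph isomorphic to F (for n ≥ ℓ). -/
open SimpleGraph

/-- The minimum vertex cover number of a graph. -/
noncomputable def coverNumber {V : Type*} [Fintype V] (G : SimpleGraph V) : ℕ :=
  sInf {k | ∃ C : Finset V, (∀ ⦃v w : V⦄, G.Adj v w → v ∈ C ∨ w ∈ C) ∧ C.card = k}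

/-- If `F` is a tree on `ℓ` vertices with bipartition `A`, `B` (`|A| ≤ |B|`),
`β(F) = (ℓ-1)/2`, and every vertex of `A` has degree at least `2`, then with
`q = (ℓ-3)/2`, the graph `K_{q,n-q}^2` (two independent edges added in the large part)
contains a copy of `F`, for `n ≥ ℓ`. -/
theorem stmt13 {V : Type*} [Fintype V] [DecidableEq V]
    (F : SimpleGraph V) [DecidableRel F.Adj] (hF : F.IsTree)
    (hℓ : 4 ≤ Fintype.card V)
    (A B : Finset V) (hdisj : Disjoint A B) (hcover : ∀ v, v ∈ A ∨ v ∈ B)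
    (hindA : ∀ v ∈ A, ∀ w ∈ A, ¬F.Adj v w)
    (hindB : ∀ v ∈ B, ∀ w ∈ B, ¬F.Adj v w)
    (hAB : A.card ≤ B.card)
    (hβ : 2 * coverNumber F + 1 = Fintype.card V)
    (hδ : ∀ x ∈ A, 2 ≤ F.degree x)
    (q : ℕ) (hq : 2 * q + 3 = Fintype.card V)
    (n : ℕ) (hn : Fintype.card V ≤ n) :
    Contains F (Kqmp q (n - q) 2) := by
  classical
  have hq1 : 1 ≤ q := by omega
  have hunion : A ∪ B = Finset.univ := by
    apply Finset.eq_univ_of_forall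
    intro v; rcases hcover v with h | h
    · exact Finset.mem_union_left _ h
    · exact Finset.mem_union_right _ h
  have hsumcard : A.card + B.card = 2 * q + 3 := by
    rw [← Finset.card_union_of_disjoint hdisj, hunion, Finset.card_univ]; omega
  have hcovA : coverNumber F ≤ A.card := by
    apply Nat.sInf_le
    refine ⟨A, ?_, rfl⟩
    intro v w hvw
    rcases hcover v with h | h
    · exact Or.inl h
    · rcases hcover w with h' | h'
      · exact Or.inr h'
      · exact absurd hvw (hindB v h w h')
  have hAcard : A.card = q + 1 := by omega
  have hBcard : B.card = q + 2 := by omega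
  have hdeg_pos : ∀ v : V, 0 < F.degree v := by
    intro v
    have hnt : Nontrivial V := Fintype.one_lt_card_iff_nontrivial.mp (by omega)
    obtain ⟨w, hw⟩ := exists_ne v
    obtain ⟨p⟩ := hF.isConnected.preconnected v w
    cases p with
    | nil => exact absurd rfl hw
    | @cons _ x _ h _ =>
      rw [← F.card_neighborFinset_eq_degree]
      exact Finset.card_pos.mpr ⟨x, (F.mem_neighborFinset v x).mpr h⟩
  have hdegA' : ∀ a ∈ A, F.degree a = (B.filter (fun b => F.Adj a b)).card := by
    intro a ha
    rw [← F.card_neighborFinset_eq_degree]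
    congr 1
    ext w
    simp only [mem_neighborFinset, Finset.mem_filter]
    constructor
    · intro h
      refine ⟨?_, h⟩
      rcases hcover w with h' | h'
      · exact absurd h (hindA a ha w h')
      · exact h'
    · exact fun h => h.2
  have hdegB' : ∀ b ∈ B, F.degree b = (A.filter (fun a => F.Adj a b)).card := by
    intro b hb
    rw [← F.card_neighborFinset_eq_degree]
    congr 1
    ext w
    simp only [mem_neighborFinset, Finset.mem_filter]
    constructor
    · intro h
      refine ⟨?_, h.symm⟩
      rcases hcover w with h' | h'
      · exact h'
      · exact absurd h (hindB b hb w h')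
    · exact fun h => h.2.symm
  have hswap : ∑ a ∈ A, F.degree a = ∑ b ∈ B, F.degree b := by
    calc ∑ a ∈ A, F.degree a
        = ∑ a ∈ A, ∑ b ∈ B, if F.Adj a b then 1 else 0 := by
          refine Finset.sum_congr rfl fun a ha => ?_
          rw [hdegA' a ha, Finset.card_filter]
      _ = ∑ b ∈ B, ∑ a ∈ A, if F.Adj a b then 1 else 0 := Finset.sum_comm
      _ = ∑ b ∈ B, F.degree b := by
          refine Finset.sum_congr rfl fun b hb => ?_
          rw [hdegB' b hb, Finset.card_filter]
  have htot : ∑ v : V, F.degree v = 2 * (2 * q + 2) := by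
    rw [F.sum_degrees_eq_twice_card_edges]
    have := hF.card_edgeFinset
    omega
  have hsplit : ∑ a ∈ A, F.degree a + ∑ b ∈ B, F.degree b = 2 * (2 * q + 2) := by
    rw [← Finset.sum_union hdisj, hunion]
    exact htot
  have hsumA : ∑ a ∈ A, F.degree a = 2 * q + 2 := by omega
  have hsumB : ∑ b ∈ B, F.degree b = 2 * q + 2 := by omega
  have hdegA2 : ∀ a ∈ A, F.degree a = 2 := by
    have hconst : ∑ _a ∈ A, (2 : ℕ) = 2 * q + 2 := by
      rw [Finset.sum_const, hAcard, smul_eq_mul]; ring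
    have h := (Finset.sum_eq_sum_iff_of_le (fun i hi => hδ i hi)).mp
      (hconst.trans hsumA.symm)
    exact fun a ha => (h a ha).symm
  -- leaves
  have hLcard : 2 ≤ (B.filter (fun v => F.degree v = 1)).card := by
    by_contra hcon
    push_neg at hcon
    have h1 : ∑ v ∈ B.filter (fun v => F.degree v = 1), F.degree v
        = (B.filter (fun v => F.degree v = 1)).card := by
      rw [Finset.card_eq_sum_ones]
      exact Finset.sum_congr rfl (fun v hv => (Finset.mem_filter.mp hv).2)
    have hcard2 : (B.filter (fun v => ¬ F.degree v = 1)).card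
        = B.card - (B.filter (fun v => F.degree v = 1)).card := by
      have := Finset.card_filter_add_card_filter_not
        (s := B) (p := fun v => F.degree v = 1)
      omega
    have h2 : 2 * (B.card - (B.filter (fun v => F.degree v = 1)).card)
        ≤ ∑ v ∈ B.filter (fun v => ¬ F.degree v = 1), F.degree v := by
      calc 2 * (B.card - (B.filter (fun v => F.degree v = 1)).card)
          = ∑ _v ∈ B.filter (fun v => ¬ F.degree v = 1), 2 := by
            rw [Finset.sum_const, hcard2, smul_eq_mul]; ring
        _ ≤ _ := Finset.sum_le_sum (fun v hv => by
            have h' := (Finset.mem_filter.mp hv).2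
            have := hdeg_pos v
            omega)
    have h3 : ∑ v ∈ B.filter (fun v => F.degree v = 1), F.degree v
        + ∑ v ∈ B.filter (fun v => ¬ F.degree v = 1), F.degree v = ∑ v ∈ B, F.degree v :=
      Finset.sum_filter_add_sum_filter_not B (fun v => F.degree v = 1) (fun v => F.degree v)
    omega
  obtain ⟨v₁, hv₁L, v₂, hv₂L, hv12⟩ := Finset.one_lt_card.mp (by omega : 1 < (B.filter (fun v => F.degree v = 1)).card)
  have hv₁B : v₁ ∈ B := (Finset.mem_filter.mp hv₁L).1
  have hd₁ : F.degree v₁ = 1 := (Finset.mem_filter.mp hv₁L).2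
  have hv₂B : v₂ ∈ B := (Finset.mem_filter.mp hv₂L).1
  have hd₂ : F.degree v₂ = 1 := (Finset.mem_filter.mp hv₂L).2
  obtain ⟨u₁, hu₁⟩ := Finset.card_eq_one.mp
    (show (F.neighborFinset v₁).card = 1 by rw [F.card_neighborFinset_eq_degree]; exact hd₁)
  obtain ⟨u₂, hu₂⟩ := Finset.card_eq_one.mp
    (show (F.neighborFinset v₂).card = 1 by rw [F.card_neighborFinset_eq_degree]; exact hd₂)
  have hadj₁ : F.Adj v₁ u₁ := by
    have : u₁ ∈ F.neighborFinset v₁ := by rw [hu₁]; exact Finset.mem_singleton_self _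
    exact (F.mem_neighborFinset v₁ u₁).mp this
  have hadj₂ : F.Adj v₂ u₂ := by
    have : u₂ ∈ F.neighborFinset v₂ := by rw [hu₂]; exact Finset.mem_singleton_self _
    exact (F.mem_neighborFinset v₂ u₂).mp this
  have huniq₁ : ∀ t, F.Adj v₁ t → t = u₁ := by
    intro t ht
    have : t ∈ F.neighborFinset v₁ := (F.mem_neighborFinset v₁ t).mpr ht
    rw [hu₁] at this
    exact Finset.mem_singleton.mp this
  have huniq₂ : ∀ t, F.Adj v₂ t → t = u₂ := by
    intro t ht
    have : t ∈ F.neighborFinset v₂ := (F.mem_neighborFinset v₂ t).mpr ht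
    rw [hu₂] at this
    exact Finset.mem_singleton.mp this
  have hu₁A : u₁ ∈ A := by
    rcases hcover u₁ with h | h
    · exact h
    · exact absurd hadj₁ (hindB v₁ hv₁B u₁ h)
  have hu₂A : u₂ ∈ A := by
    rcases hcover u₂ with h | h
    · exact h
    · exact absurd hadj₂ (hindB v₂ hv₂B u₂ h)
  have hu12 : u₁ ≠ u₂ := by
    intro he
    subst he
    have hdu : F.degree u₁ = 2 := hdegA2 u₁ hu₁A
    have hsub : ({v₁, v₂} : Finset V) ⊆ F.neighborFinset u₁ := by
      intro t ht
      rcases Finset.mem_insert.mp ht with h | h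
      · subst h; exact (F.mem_neighborFinset u₁ t).mpr hadj₁.symm
      · rw [Finset.mem_singleton.mp h]; exact (F.mem_neighborFinset u₁ v₂).mpr hadj₂.symm
    have hNeq : F.neighborFinset u₁ = {v₁, v₂} := by
      refine (Finset.eq_of_subset_of_card_le hsub ?_).symm
      rw [F.card_neighborFinset_eq_degree, hdu]
      rw [Finset.card_insert_of_notMem (by simpa using hv12), Finset.card_singleton]
    have hclosed : ∀ s ∈ ({v₁, v₂, u₁} : Finset V), ∀ t, F.Adj s t → t ∈ ({v₁, v₂, u₁} : Finset V) := by
      intro s hs t hst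
      simp only [Finset.mem_insert, Finset.mem_singleton] at hs ⊢
      rcases hs with h | h | h
      · subst h; exact Or.inr (Or.inr (huniq₁ t hst))
      · subst h; exact Or.inr (Or.inr (huniq₂ t hst))
      · subst h
        have : t ∈ F.neighborFinset s := (F.mem_neighborFinset s t).mpr hst
        rw [hNeq] at this
        rcases Finset.mem_insert.mp this with h | h
        · exact Or.inl h
        · exact Or.inr (Or.inl (Finset.mem_singleton.mp h))
    have hwalk : ∀ (a b : V), F.Walk a b → a ∈ ({v₁, v₂, u₁} : Finset V) → b ∈ ({v₁, v₂, u₁} : Finset V) := by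
      intro a b p
      induction p with
      | nil => exact id
      | cons h p ih => exact fun ha => ih (hclosed _ ha _ h)
    have hS3 : ({v₁, v₂, u₁} : Finset V).card ≤ 3 :=
      le_trans (Finset.card_insert_le _ _)
        (by have := Finset.card_insert_le v₂ ({u₁} : Finset V); simp at this ⊢; omega)
    obtain ⟨x, hx⟩ : ∃ x, x ∉ ({v₁, v₂, u₁} : Finset V) := by
      by_contra hcon
      push_neg at hcon
      have hsub2 : Finset.univ ⊆ ({v₁, v₂, u₁} : Finset V) := fun x _ => hcon x
      have := Finset.card_le_card hsub2
      rw [Finset.card_univ] at this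
      omega
    obtain ⟨p⟩ := hF.isConnected.preconnected u₁ x
    exact hx (hwalk _ _ p (by simp))
  -- distinctness
  have hAB_ne : ∀ a ∈ A, ∀ b ∈ B, a ≠ b := by
    intro a ha b hb he
    exact (Finset.disjoint_left.mp hdisj ha) (he ▸ hb)
  have hu1v1 : u₁ ≠ v₁ := hAB_ne u₁ hu₁A v₁ hv₁B
  have hu1v2 : u₁ ≠ v₂ := hAB_ne u₁ hu₁A v₂ hv₂B
  have hu2v1 : u₂ ≠ v₁ := hAB_ne u₂ hu₂A v₁ hv₁B
  have hu2v2 : u₂ ≠ v₂ := hAB_ne u₂ hu₂A v₂ hv₂B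
  -- sizes for the embedding
  have hm4 : q + 3 ≤ n - q := by omega
  have hB'card : ((B.erase v₁).erase v₂).card = q := by
    rw [Finset.card_erase_of_mem (Finset.mem_erase.mpr ⟨hv12.symm, hv₂B⟩),
      Finset.card_erase_of_mem hv₁B]
    omega
  have hA''card : ((A.erase u₁).erase u₂).card = q - 1 := by
    rw [Finset.card_erase_of_mem (Finset.mem_erase.mpr ⟨hu12.symm, hu₂A⟩),
      Finset.card_erase_of_mem hu₁A]
    omega
  let eB := Finset.equivFinOfCardEq hB'card
  let eA := Finset.equivFinOfCardEq hA''card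
  obtain ⟨f, hf⟩ : ∃ f : V → Fin q ⊕ Fin (n - q), f = fun v =>
      if v = v₁ then Sum.inr ⟨0, by omega⟩
      else if v = u₁ then Sum.inr ⟨1, by omega⟩
      else if v = v₂ then Sum.inr ⟨2, by omega⟩
      else if v = u₂ then Sum.inr ⟨3, by omega⟩
      else if h : v ∈ (A.erase u₁).erase u₂ then
        Sum.inr ⟨(eA ⟨v, h⟩).val + 4, by have := (eA ⟨v, h⟩).isLt; omega⟩
      else if h' : v ∈ (B.erase v₁).erase v₂ then Sum.inl (eB ⟨v, h'⟩)
      else Sum.inl ⟨0, by omega⟩ := ⟨_, rfl⟩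
  obtain ⟨g, hg⟩ : ∃ g : Fin q ⊕ Fin (n - q) → V, g = fun x =>
      match x with
      | Sum.inl k => (eB.symm k).val
      | Sum.inr j =>
        if j.val = 0 then v₁ else if j.val = 1 then u₁
        else if j.val = 2 then v₂ else if j.val = 3 then u₂
        else if h : j.val - 4 < q - 1 then (eA.symm ⟨j.val - 4, h⟩).val else v₁ := ⟨_, rfl⟩
  -- evaluation lemmas
  have hfv1 : f v₁ = Sum.inr ⟨0, by omega⟩ := by simp only [hf]; simp
  have hfu1 : f u₁ = Sum.inr ⟨1, by omega⟩ := by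
    simp [hf, hu1v1]
  have hfv2 : f v₂ = Sum.inr ⟨2, by omega⟩ := by
    simp [hf, hv12.symm, Ne.symm hu1v2]
  have hfu2 : f u₂ = Sum.inr ⟨3, by omega⟩ := by
    simp [hf, hu2v1, Ne.symm hu12, hu2v2]
  have hfA : ∀ v, (h : v ∈ (A.erase u₁).erase u₂) → v ≠ v₁ → v ≠ v₂ →
      f v = Sum.inr ⟨(eA ⟨v, h⟩).val + 4, by have := (eA ⟨v, h⟩).isLt; omega⟩ := by
    intro v h h1 h2
    have hm := Finset.mem_erase.mp h
    have hm2 := Finset.mem_erase.mp hm.2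
    simp only [hf]
    rw [if_neg h1, if_neg hm2.1, if_neg h2, if_neg hm.1, dif_pos h]
  have hfB : ∀ v, (h : v ∈ (B.erase v₁).erase v₂) → f v = Sum.inl (eB ⟨v, h⟩) := by
    intro v h
    have hm := Finset.mem_erase.mp h
    have hm2 := Finset.mem_erase.mp hm.2
    have hvB : v ∈ B := hm2.2
    have hnA : v ∉ A := Finset.disjoint_right.mp hdisj hvB
    have hnA'' : v ∉ (A.erase u₁).erase u₂ :=
      fun hc => hnA (Finset.mem_of_mem_erase (Finset.mem_of_mem_erase hc))
    simp only [hf]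
    rw [if_neg hm2.1, if_neg (fun hc : v = u₁ => (hAB_ne u₁ hu₁A v hvB) hc.symm),
      if_neg hm.1, if_neg (fun hc : v = u₂ => (hAB_ne u₂ hu₂A v hvB) hc.symm),
      dif_neg hnA'', dif_pos h]
  have hfright : ∀ v ∈ A, ∃ k, f v = Sum.inr k := by
    intro v hv
    have h1 : v ≠ v₁ := hAB_ne v hv v₁ hv₁B
    have h3 : v ≠ v₂ := hAB_ne v hv v₂ hv₂B
    by_cases h2 : v = u₁
    · exact ⟨_, by rw [h2, hfu1]⟩
    by_cases h4 : v = u₂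
    · exact ⟨_, by rw [h4, hfu2]⟩
    have hmem : v ∈ (A.erase u₁).erase u₂ :=
      Finset.mem_erase.mpr ⟨h4, Finset.mem_erase.mpr ⟨h2, hv⟩⟩
    exact ⟨_, hfA v hmem h1 h3⟩
  have hfleft : ∀ v ∈ B, v ≠ v₁ → v ≠ v₂ → ∃ k, f v = Sum.inl k := by
    intro v hv h1 h2
    have hmem : v ∈ (B.erase v₁).erase v₂ :=
      Finset.mem_erase.mpr ⟨h2, Finset.mem_erase.mpr ⟨h1, hv⟩⟩
    exact ⟨_, hfB v hmem⟩
  -- left inverse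
  have hgf : ∀ v, g (f v) = v := by
    intro v
    by_cases h1 : v = v₁
    · subst h1; rw [hfv1]; simp only [hg]; norm_num
    by_cases h2 : v = u₁
    · subst h2; rw [hfu1]; simp only [hg]; norm_num
    by_cases h3 : v = v₂
    · subst h3; rw [hfv2]; simp only [hg]; norm_num
    by_cases h4 : v = u₂
    · subst h4; rw [hfu2]; simp only [hg]; norm_num
    by_cases h5 : v ∈ (A.erase u₁).erase u₂
    · rw [hfA v h5 h1 h3]; simp only [hg]
      have hlt := (eA ⟨v, h5⟩).isLt
      rw [if_neg (by omega), if_neg (by omega), if_neg (by omega), if_neg (by omega),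
        dif_pos (by omega : (eA ⟨v, h5⟩).val + 4 - 4 < q - 1)]
      have he : (⟨(eA ⟨v, h5⟩).val + 4 - 4, by omega⟩ : Fin (q - 1)) = eA ⟨v, h5⟩ :=
        Fin.ext (by show (eA ⟨v, h5⟩).val + 4 - 4 = (eA ⟨v, h5⟩).val; omega)
      rw [he, Equiv.symm_apply_apply]
    · have hvB : v ∈ B := by
        rcases hcover v with h | h
        · exact absurd (Finset.mem_erase.mpr ⟨h4, Finset.mem_erase.mpr ⟨h2, h⟩⟩) h5
        · exact h
      have hmem : v ∈ (B.erase v₁).erase v₂ :=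
        Finset.mem_erase.mpr ⟨h3, Finset.mem_erase.mpr ⟨h1, hvB⟩⟩
      rw [hfB v hmem]; simp only [hg]
      rw [Equiv.symm_apply_apply]
  have hinj : Function.Injective f := Function.LeftInverse.injective hgf
  -- homomorphism
  have kadj : ∀ (a b : Fin (n - q)), a.val < 4 → b.val < 4 → a.val / 2 = b.val / 2 → a ≠ b →
      (Kqmp q (n - q) 2).Adj (Sum.inr a) (Sum.inr b) := by
    intro a b ha hb hab hne
    exact ⟨fun h => hne (Sum.inr.inj h), Or.inr (Or.inr ⟨a, b, rfl, rfl, hab, ha, hb⟩)⟩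
  have main : ∀ v ∈ A, ∀ w ∈ B, F.Adj v w → (Kqmp q (n - q) 2).Adj (f v) (f w) := by
    intro v hv w hw hvw
    by_cases hw1 : w = v₁
    · subst hw1
      have hv' : v = u₁ := huniq₁ v hvw.symm
      subst hv'
      rw [hfu1, hfv1]
      exact kadj _ _ (by norm_num) (by norm_num) (by norm_num) (by simp [Fin.ext_iff])
    by_cases hw2 : w = v₂
    · subst hw2
      have hv' : v = u₂ := huniq₂ v hvw.symm
      subst hv'
      rw [hfu2, hfv2]
      exact kadj _ _ (by norm_num) (by norm_num) (by norm_num) (by simp [Fin.ext_iff])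
    obtain ⟨j, hj⟩ := hfright v hv
    obtain ⟨k, hk⟩ := hfleft w hw hw1 hw2
    rw [hj, hk]
    exact ⟨by simp, Or.inr (Or.inl ⟨by simp, by simp⟩)⟩
  refine ⟨⟨f, ?_⟩, hinj⟩
  intro a b hab
  rcases hcover a with ha | ha
  · rcases hcover b with hb | hb
    · exact absurd hab (hindA a ha b hb)
    · exact main a ha b hb hab
  · rcases hcover b with hb | hb
    · exact (main b hb a ha hab.symm).symm
    · exact absurd hab (hindB a ha b hb)
end

section
/- Let F be a spider that is not a star, i.e., F has a leg of length at least 2. Let A, B be the bipartition classes with |A| ≤ |B|, q = |A| - 1. Then the graph obtained from K_{q, m} by adding a path P₃ (path on 3 vertices) inside the part of size m contains a copy of F whenever m ≥ |V(F)| - q. Consequently, for any extremal F-free host of the form (clique or independent set of size q) joined to a large set R, the graph induced on R must be P₃-free. -/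
open SimpleGraph

/-- The complete bipartite graph `K_{q,m}` with a path on three vertices
(edges `0-1` and `1-2`) added inside the part of size `m`. -/
def KqmP3 (q m : ℕ) : SimpleGraph (Fin q ⊕ Fin m) where
  Adj v w := v ≠ w ∧ ((v.isLeft ∧ w.isRight) ∨ (w.isLeft ∧ v.isRight) ∨
    ∃ a b : Fin m, v = Sum.inr a ∧ w = Sum.inr b ∧
      a.val + b.val ≤ 3 ∧ (a.val + 1 = b.val ∨ b.val + 1 = a.val))
  symm := ⟨by
    rintro v w ⟨h1, h2⟩
    refine ⟨h1.symm, ?_⟩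
    rcases h2 with h | h | ⟨a, b, rfl, rfl, hs, he⟩
    · exact Or.inr (Or.inl h)
    · exact Or.inl h
    · refine Or.inr (Or.inr ⟨b, a, rfl, rfl, ?_, he.symm⟩)
      omega⟩
  loopless := ⟨by rintro v ⟨h1, -⟩; exact h1 rfl⟩

/-- Extend prescribed values at two points to an injection. -/
lemma ext2 {α β : Type*} [DecidableEq β] {ι : α → β}
    (hι : Function.Injective ι) {x w : α} {t1 t0 : β}
    (hxw : x ≠ w) (h10 : t1 ≠ t0) :
    ∃ τ : α → β, Function.Injective τ ∧ τ x = t1 ∧ τ w = t0 := by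
  classical
  set s1 : Equiv.Perm β := Equiv.swap (ι x) t1 with hs1
  set s2 : Equiv.Perm β := Equiv.swap (s1 (ι w)) t0 with hs2
  have e1 : s1 (ι x) = t1 := Equiv.swap_apply_left _ _
  have hne1 : t1 ≠ s1 (ι w) := by
    rw [← e1]
    exact fun h => hxw (hι (s1.injective h))
  refine ⟨fun v => s2 (s1 (ι v)), fun u v h => hι (s1.injective (s2.injective h)), ?_, ?_⟩
  · show s2 (s1 (ι x)) = t1
    rw [e1]
    exact Equiv.swap_apply_of_ne_of_ne hne1 h10
  · exact Equiv.swap_apply_left _ _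

/-- Extend prescribed values at three points to an injection. -/
lemma ext3 {α β : Type*} [DecidableEq β] {ι : α → β}
    (hι : Function.Injective ι) {x w b : α} {t1 t0 t2 : β}
    (hxw : x ≠ w) (hxb : x ≠ b) (hwb : w ≠ b)
    (h10 : t1 ≠ t0) (h12 : t1 ≠ t2) (h02 : t0 ≠ t2) :
    ∃ τ : α → β, Function.Injective τ ∧ τ x = t1 ∧ τ w = t0 ∧ τ b = t2 := by
  classical
  obtain ⟨g, hg, hgx, hgw⟩ := ext2 hι hxw h10
  set s3 : Equiv.Perm β := Equiv.swap (g b) t2 with hs3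
  refine ⟨fun v => s3 (g v), fun u v h => hg (s3.injective h), ?_, ?_, ?_⟩
  · show s3 (g x) = t1
    rw [hgx]
    refine Equiv.swap_apply_of_ne_of_ne ?_ h12
    rw [← hgx]
    exact fun h => hxb (hg h)
  · show s3 (g w) = t0
    rw [hgw]
    refine Equiv.swap_apply_of_ne_of_ne ?_ h02
    rw [← hgw]
    exact fun h => hwb (hg h)
  · exact Equiv.swap_apply_left _ _

/-- Let `F` be a spider with center `c` that is not a star (some leg has length at
least `2`), with bipartition `A`, `B`, `|A| ≤ |B|`, and `q = |A| - 1`. Then `K_{q,m}`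
with a `P₃` added inside the part of size `m` contains a copy of `F` whenever
`m ≥ |V(F)| - q`. -/
theorem stmt15 {V : Type*} [Fintype V] [DecidableEq V]
    (F : SimpleGraph V) [DecidableRel F.Adj] (hF : F.IsTree)
    (c : V) (hc : ∀ v, v ≠ c → F.degree v ≤ 2) (hcd : 2 ≤ F.degree c)
    (hnotstar : ∃ v, 2 ≤ F.dist c v)
    (A B : Finset V) (hdisj : Disjoint A B) (hcover : ∀ v, v ∈ A ∨ v ∈ B)
    (hindA : ∀ v ∈ A, ∀ w ∈ A, ¬F.Adj v w)
    (hindB : ∀ v ∈ B, ∀ w ∈ B, ¬F.Adj v w)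
    (hAB : A.card ≤ B.card)
    (q : ℕ) (hq : q + 1 = A.card)
    (m : ℕ) (hm : Fintype.card V - q ≤ m) :
    Contains F (KqmP3 q m) := by
  classical
  -- Step 1: find two consecutive edges out of c along a path
  obtain ⟨v, hv⟩ := hnotstar
  obtain ⟨p0⟩ := hF.isConnected.preconnected c v
  have hlen : 2 ≤ p0.bypass.length := le_trans hv (SimpleGraph.dist_le _)
  have hpath : p0.bypass.IsPath := SimpleGraph.Walk.bypass_isPath p0
  obtain ⟨v₁, v₂, hadj1, hadj2, hne⟩ :
      ∃ v₁ v₂, F.Adj c v₁ ∧ F.Adj v₁ v₂ ∧ v₂ ≠ c := by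
    set p := p0.bypass with hp
    clear_value p
    cases p with
    | nil => simp at hlen
    | cons h1 p' =>
      cases p' with
      | nil => simp at hlen
      | cons h2 p'' =>
        refine ⟨_, _, h1, h2, ?_⟩
        intro hEq
        rw [SimpleGraph.Walk.cons_isPath_iff] at hpath
        apply hpath.2
        rw [SimpleGraph.Walk.support_cons]
        right
        rw [← hEq]
        exact SimpleGraph.Walk.start_mem_support p''
  -- Step 2: find x ∈ A, x ≠ c, with a neighbor
  obtain ⟨x, hxA, hxc, w, hxw⟩ :
      ∃ x, x ∈ A ∧ x ≠ c ∧ ∃ w, F.Adj x w := by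
    rcases hcover c with hcA | hcB
    · have hv1B : v₁ ∈ B := (hcover v₁).resolve_left fun h => hindA c hcA v₁ h hadj1
      have hv2A : v₂ ∈ A := (hcover v₂).resolve_right fun h => hindB v₁ hv1B v₂ h hadj2
      exact ⟨v₂, hv2A, hne, v₁, hadj2.symm⟩
    · have hv1A : v₁ ∈ A := (hcover v₁).resolve_right fun h => hindB c hcB v₁ h hadj1
      exact ⟨v₁, hv1A, hadj1.ne.symm, c, hadj1.symm⟩
  have hxB : ∀ u, F.Adj x u → u ∈ B := fun u hu =>
    (hcover u).resolve_left fun h => hindA x hxA u h hu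
  have hxdeg : (F.neighborFinset x).card ≤ 2 := by
    rw [F.card_neighborFinset_eq_degree]
    exact hc x hxc
  -- Step 3: setup
  set A' : Finset V := A.erase x with hA'def
  have hA' : A'.card = q := by
    rw [hA'def, Finset.card_erase_of_mem hxA, ← hq]
    omega
  set S : Finset V := A'ᶜ with hSdef
  have hSm : S.card ≤ m := by
    rw [hSdef, Finset.card_compl, hA']
    exact hm
  have hxS : x ∈ S := Finset.mem_compl.2 (Finset.notMem_erase x A)
  have hBS : ∀ u ∈ B, u ∈ S := fun u hu =>
    Finset.mem_compl.2 fun h =>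
      Finset.disjoint_left.mp hdisj (Finset.mem_of_mem_erase h) hu
  have hBnx : ∀ u ∈ B, u ≠ x := fun u hu h =>
    Finset.disjoint_left.mp hdisj (h ▸ hxA) hu
  let ι : {v // v ∈ S} → Fin m := fun v => Fin.castLE hSm (S.equivFin v)
  have hι : Function.Injective ι := fun u v' h =>
    S.equivFin.injective (Fin.castLE_injective _ h)
  have hwB : w ∈ B := hxB w hxw
  have hwS : w ∈ S := hBS w hwB
  have hwx : w ≠ x := hBnx w hwB
  -- Step 4: build the injection τ on S with the right values
  have key : ∃ τ : {v // v ∈ S} → Fin m, Function.Injective τ ∧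
      ∀ (u1 u2 : {v // v ∈ S}), u1.1 = x → F.Adj x u2.1 →
        (KqmP3 q m).Adj (Sum.inr (τ u1)) (Sum.inr (τ u2)) := by
    by_cases hb : ∃ b, F.Adj x b ∧ b ≠ w
    · -- two neighbors
      obtain ⟨b, hxb, hbw⟩ := hb
      have hbB : b ∈ B := hxB b hxb
      have hbS : b ∈ S := hBS b hbB
      have hbx : b ≠ x := hBnx b hbB
      have hm3 : 3 ≤ m := by
        have hsub : ({x, w, b} : Finset V) ⊆ S := by
          intro u hu
          rcases Finset.mem_insert.1 hu with rfl | hu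
          · exact hxS
          rcases Finset.mem_insert.1 hu with rfl | hu
          · exact hwS
          rw [Finset.mem_singleton] at hu
          exact hu ▸ hbS
        have hcard : ({x, w, b} : Finset V).card = 3 :=
          Finset.card_eq_three.2 ⟨x, w, b, hwx.symm, hbx.symm, hbw.symm, rfl⟩
        calc 3 = ({x, w, b} : Finset V).card := hcard.symm
          _ ≤ S.card := Finset.card_le_card hsub
          _ ≤ m := hSm
      have hNeq : F.neighborFinset x = {w, b} := by
        apply Eq.symm
        apply Finset.eq_of_subset_of_card_le
        · intro u hu
          rcases Finset.mem_insert.1 hu with rfl | hu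
          · rw [SimpleGraph.mem_neighborFinset]; exact hxw
          rw [Finset.mem_singleton] at hu
          rw [SimpleGraph.mem_neighborFinset]; exact hu ▸ hxb
        · calc (F.neighborFinset x).card ≤ 2 := hxdeg
            _ = ({w, b} : Finset V).card := by
              rw [Finset.card_insert_of_notMem (by simp [hbw.symm]), Finset.card_singleton]
      obtain ⟨τ, hτinj, hτx, hτw, hτb⟩ :=
        ext3 (x := (⟨x, hxS⟩ : {v // v ∈ S})) (w := ⟨w, hwS⟩) (b := ⟨b, hbS⟩)
          (t1 := (⟨1, by omega⟩ : Fin m)) (t0 := ⟨0, by omega⟩) (t2 := ⟨2, by omega⟩)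
          hι (fun h => hwx (congrArg Subtype.val h).symm)
          (fun h => hbx (congrArg Subtype.val h).symm)
          (fun h => hbw (congrArg Subtype.val h).symm)
          (by simp) (by simp) (by simp)
      refine ⟨τ, hτinj, ?_⟩
      intro u1 u2 h1 h2
      have hu1 : u1 = ⟨x, hxS⟩ := Subtype.ext h1
      have hu2 : u2 = ⟨w, hwS⟩ ∨ u2 = ⟨b, hbS⟩ := by
        have hmm : u2.1 ∈ F.neighborFinset x := by
          rw [SimpleGraph.mem_neighborFinset]; exact h2
        rw [hNeq, Finset.mem_insert, Finset.mem_singleton] at hmm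
        rcases hmm with h | h
        · exact Or.inl (Subtype.ext h)
        · exact Or.inr (Subtype.ext h)
      rcases hu2 with rfl | rfl
      · rw [hu1, hτx, hτw]
        exact ⟨by simp, Or.inr (Or.inr ⟨_, _, rfl, rfl, by norm_num, Or.inr (by norm_num)⟩)⟩
      · rw [hu1, hτx, hτb]
        exact ⟨by simp, Or.inr (Or.inr ⟨_, _, rfl, rfl, by norm_num, Or.inl (by norm_num)⟩)⟩
    · -- single neighbor w
      push_neg at hb
      have hm2 : 2 ≤ m := by
        have hsub : ({x, w} : Finset V) ⊆ S := by
          intro u hu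
          rcases Finset.mem_insert.1 hu with rfl | hu
          · exact hxS
          rw [Finset.mem_singleton] at hu
          exact hu ▸ hwS
        have hcard : ({x, w} : Finset V).card = 2 := by
          rw [Finset.card_insert_of_notMem (by simp [hwx.symm]), Finset.card_singleton]
        calc 2 = ({x, w} : Finset V).card := hcard.symm
          _ ≤ S.card := Finset.card_le_card hsub
          _ ≤ m := hSm
      obtain ⟨τ, hτinj, hτx, hτw⟩ :=
        ext2 (x := (⟨x, hxS⟩ : {v // v ∈ S})) (w := ⟨w, hwS⟩)
          (t1 := (⟨1, by omega⟩ : Fin m)) (t0 := ⟨0, by omega⟩)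
          hι (fun h => hwx (congrArg Subtype.val h).symm) (by simp)
      refine ⟨τ, hτinj, ?_⟩
      intro u1 u2 h1 h2
      have hu1 : u1 = ⟨x, hxS⟩ := Subtype.ext h1
      have hu2 : u2 = ⟨w, hwS⟩ := Subtype.ext (hb u2.1 h2)
      rw [hu1, hu2, hτx, hτw]
      exact ⟨by simp, Or.inr (Or.inr ⟨_, _, rfl, rfl, by norm_num, Or.inr (by norm_num)⟩)⟩
  -- Step 5: assemble the embedding
  obtain ⟨τ, hτinj, hadjτ⟩ := key
  let eA : {v // v ∈ A'} ≃ Fin q := Finset.equivFinOfCardEq hA'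
  let f : V → Fin q ⊕ Fin m := fun v =>
    if h : v ∈ A' then Sum.inl (eA ⟨v, h⟩) else Sum.inr (τ ⟨v, Finset.mem_compl.2 h⟩)
  have hmemx : ∀ u, u ∈ A → u ∉ A' → u = x := by
    intro u huA hu
    by_contra hne
    exact hu (Finset.mem_erase.2 ⟨hne, huA⟩)
  refine ⟨⟨f, ?_⟩, ?_⟩
  · intro u1 u2 hadj
    by_cases h1 : u1 ∈ A' <;> by_cases h2 : u2 ∈ A'
    · exact absurd hadj
        (hindA u1 (Finset.mem_of_mem_erase h1) u2 (Finset.mem_of_mem_erase h2))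
    · simp only [f, dif_pos h1, dif_neg h2]
      exact ⟨by simp, Or.inl ⟨by simp, by simp⟩⟩
    · simp only [f, dif_neg h1, dif_pos h2]
      exact ⟨by simp, Or.inr (Or.inl ⟨by simp, by simp⟩)⟩
    · have hx12 : u1 = x ∨ u2 = x := by
        rcases hcover u1 with hA1 | hB1
        · exact Or.inl (hmemx u1 hA1 h1)
        · rcases hcover u2 with hA2 | hB2
          · exact Or.inr (hmemx u2 hA2 h2)
          · exact absurd hadj (hindB u1 hB1 u2 hB2)
      simp only [f, dif_neg h1, dif_neg h2]
      rcases hx12 with heq | heq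
      · exact hadjτ ⟨u1, Finset.mem_compl.2 h1⟩ ⟨u2, Finset.mem_compl.2 h2⟩ heq
          (by rw [← heq]; exact hadj)
      · exact (hadjτ ⟨u2, Finset.mem_compl.2 h2⟩ ⟨u1, Finset.mem_compl.2 h1⟩ heq
          (by rw [← heq]; exact hadj.symm)).symm
  · intro u1 u2 h
    have h' : f u1 = f u2 := h
    by_cases h1 : u1 ∈ A' <;> by_cases h2 : u2 ∈ A'
    · simp only [f, dif_pos h1, dif_pos h2, Sum.inl.injEq] at h'
      exact Subtype.ext_iff.1 (eA.injective h')
    · simp only [f, dif_pos h1, dif_neg h2] at h'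
      exact absurd h' (by simp)
    · simp only [f, dif_neg h1, dif_pos h2] at h'
      exact absurd h' (by simp)
    · simp only [f, dif_neg h1, dif_neg h2, Sum.inr.injEq] at h'
      exact Subtype.ext_iff.1 (hτinj h')
end

section
/- Let r₂ ≥ 1, r₃ ≥ 2, and let F be the spider with one center, r₂ legs of length 3 and r₃ legs of length 1, so ℓ = 1 + 3r₂ + r₃ vertices, and set r = r₂ + r₃, q = (ℓ - r - 1)/2 = r₂. Then for every n, the graph S_{n,q}^{⌊(n-q)/2⌋}, obtained from K_q ∇ (n-q)K₁ by adding a maximum matching (⌊(n-q)/2⌋ independent edges) inside the independent set, contains no subgraph isomorphic to F. -/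
open SimpleGraph

lemma snqp_adj {n q p : ℕ} {v w : Fin q ⊕ Fin (n - q)} :
    (Snqp n q p).Adj v w ↔ v ≠ w ∧ (v.isLeft ∨ w.isLeft ∨
    ∃ a b : Fin (n - q), v = Sum.inr a ∧ w = Sum.inr b ∧
      a.val / 2 = b.val / 2 ∧ a.val < 2 * p ∧ b.val < 2 * p) := Iff.rfl

/-- Let `r₂ ≥ 1`, `r₃ ≥ 2`, and let `F` be the spider with center `c`, `r₂` legs of
length `3` and `r₃` legs of length `1`, so that `ℓ = 1 + 3r₂ + r₃`. Then with `q = r₂`,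
for every `n`, the graph `S_{n,q}^{⌊(n-q)/2⌋}` (a maximum matching embedded in the
independent set) contains no copy of `F`. -/
theorem stmt16 {V : Type*} [Fintype V] [DecidableEq V]
    (F : SimpleGraph V) [DecidableRel F.Adj] (hF : F.IsTree)
    (c : V) (hc : ∀ v, v ≠ c → F.degree v ≤ 2)
    (hleaf : ∀ v, F.degree v = 1 → F.dist c v = 1 ∨ F.dist c v = 3)
    (r₂ r₃ : ℕ) (hr₂ : 1 ≤ r₂) (hr₃ : 2 ≤ r₃)
    (hr₂card : r₂ = (Finset.univ.filter (fun v => F.degree v = 1 ∧ F.dist c v = 3)).card)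
    (hr₃card : r₃ = (Finset.univ.filter (fun v => F.degree v = 1 ∧ F.dist c v = 1)).card)
    (hℓ : Fintype.card V = 1 + 3 * r₂ + r₃)
    (n : ℕ) :
    ¬ Contains F (Snqp n r₂ ((n - r₂) / 2)) := by
  classical
  rintro ⟨f, hf⟩
  set S : Finset V := Finset.univ.filter (fun v => F.degree v = 1 ∧ F.dist c v = 3) with hS
  -- Key: no path on 3 vertices can be mapped entirely into the right side.
  have key : ∀ x y z : V, F.Adj x y → F.Adj y z → x ≠ z →
      ∃ i : Fin r₂, f x = Sum.inl i ∨ f y = Sum.inl i ∨ f z = Sum.inl i := by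
    intro x y z hxy hyz hxz
    rcases hx : f x with i | a
    · exact ⟨i, Or.inl rfl⟩
    rcases hy : f y with i | b
    · exact ⟨i, Or.inr (Or.inl rfl)⟩
    rcases hz : f z with i | d
    · exact ⟨i, Or.inr (Or.inr rfl)⟩
    exfalso
    have h1 := f.map_adj hxy
    have h2 := f.map_adj hyz
    rw [hx, hy, snqp_adj] at h1
    rw [hy, hz, snqp_adj] at h2
    obtain ⟨hne1, h1⟩ := h1
    obtain ⟨hne2, h2⟩ := h2
    simp only [Sum.isLeft_inr, Bool.false_eq_true, false_or, Sum.inr.injEq] at h1 h2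
    obtain ⟨a1, b1, ha1, hb1, e1, -, -⟩ := h1
    obtain ⟨a2, b2, ha2, hb2, e2, -, -⟩ := h2
    subst ha1; subst hb1; subst ha2; subst hb2
    have had : f x ≠ f z := fun h => hxz (hf h)
    rw [hx, hz] at had
    have hab' : a.val ≠ b.val := fun h => hne1 (by rw [Fin.ext h])
    have hbd' : b.val ≠ d.val := fun h => hne2 (by rw [Fin.ext h])
    have had' : a.val ≠ d.val := fun h => had (by rw [Fin.ext h])
    omega
  -- degree lower bounds from distinct neighbors
  have deg2 : ∀ v x y : V, F.Adj v x → F.Adj v y → x ≠ y → 2 ≤ F.degree v := by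
    intro v x y h1 h2 hxy
    have hsub : ({x, y} : Finset V) ⊆ F.neighborFinset v := by
      intro t ht
      simp only [Finset.mem_insert, Finset.mem_singleton] at ht
      rcases ht with rfl | rfl <;> simp [h1, h2]
    have := Finset.card_le_card hsub
    rwa [Finset.card_insert_of_notMem (by simpa using hxy), Finset.card_singleton] at this
  have deg3 : ∀ v x y z : V, F.Adj v x → F.Adj v y → F.Adj v z → x ≠ y → x ≠ z → y ≠ z →
      3 ≤ F.degree v := by
    intro v x y z h1 h2 h3 hxy hxz hyz
    have hsub : ({x, y, z} : Finset V) ⊆ F.neighborFinset v := by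
      intro t ht
      simp only [Finset.mem_insert, Finset.mem_singleton] at ht
      rcases ht with rfl | rfl | rfl <;> simp [h1, h2, h3]
    have := Finset.card_le_card hsub
    rwa [Finset.card_insert_of_notMem (by simp [hxy, hxz]),
      Finset.card_insert_of_notMem (by simpa using hyz), Finset.card_singleton] at this
  -- extract the path of length 3 to each far leaf
  have hpath : ∀ w : V, ∃ a b : V, F.dist c w = 3 →
      F.Adj c a ∧ F.Adj a b ∧ F.Adj b w ∧ F.dist c b = 2 ∧ a ≠ w := by
    intro w
    by_cases hw : F.dist c w = 3
    · have h0 : F.dist c w ≠ 0 := by rw [hw]; omega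
      obtain ⟨q, hq⟩ := exists_walk_of_dist_ne_zero h0
      rw [hw] at hq
      refine ⟨q.getVert 1, q.getVert 2, fun _ => ?_⟩
      have h01 := q.adj_getVert_succ (i := 0) (by omega)
      have h12 := q.adj_getVert_succ (i := 1) (by omega)
      have h23 := q.adj_getVert_succ (i := 2) (by omega)
      rw [q.getVert_zero] at h01
      have hgl : q.getVert (2 + 1) = w := by
        have h := q.getVert_length
        rw [hq] at h
        exact h
      rw [hgl] at h23
      have hle : F.dist c (q.getVert 2) ≤ 2 := by
        have := SimpleGraph.dist_le (Walk.cons h01 h12.toWalk)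
        simpa using this
      have hge : 3 ≤ F.dist c (q.getVert 2) + 1 := by
        have ht := hF.isConnected.dist_triangle (u := c) (v := q.getVert 2) (w := w)
        have hbw : F.dist (q.getVert 2) w ≤ 1 := by
          have := SimpleGraph.dist_le h23.toWalk
          simpa using this
        omega
      have haw : q.getVert 1 ≠ w := by
        intro h
        have hd : F.dist c (q.getVert (0 + 1)) = 1 := SimpleGraph.dist_eq_one_iff_adj.mpr h01
        rw [show (0 + 1 : ℕ) = 1 from rfl, h] at hd
        omega
      exact ⟨h01, h12, h23, by omega, haw⟩
    · exact ⟨c, c, fun h => absurd h hw⟩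
  choose A B hAB using hpath
  -- two near leaves
  have hT : 1 < (Finset.univ.filter (fun v => F.degree v = 1 ∧ F.dist c v = 1)).card := by omega
  obtain ⟨u, hu, v, hv, huv⟩ := Finset.one_lt_card.mp hT
  rw [Finset.mem_filter] at hu hv
  have hcu : F.Adj c u := SimpleGraph.dist_eq_one_iff_adj.mp hu.2.2
  have hcv : F.Adj c v := SimpleGraph.dist_eq_one_iff_adj.mp hv.2.2
  -- facts about each far leaf's path
  have facts : ∀ s ∈ S, F.Adj c (A s) ∧ F.Adj (A s) (B s) ∧ F.Adj (B s) s ∧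
      F.dist c (A s) = 1 ∧ F.dist c (B s) = 2 ∧ F.dist c s = 3 ∧ 2 ≤ F.degree (A s) ∧
      A s ≠ s := by
    intro s hs
    rw [hS, Finset.mem_filter] at hs
    obtain ⟨h1, h2, h3, h4, h5⟩ := hAB s hs.2.2
    have hBc : c ≠ B s := by
      intro h
      rw [← h, SimpleGraph.dist_self] at h4
      omega
    exact ⟨h1, h2, h3, SimpleGraph.dist_eq_one_iff_adj.mpr h1, h4, hs.2.2,
      deg2 _ _ _ h1.symm h2 hBc, h5⟩
  -- disjointness of triples
  have disjSS : ∀ s ∈ S, ∀ s' ∈ S, s ≠ s' → ∀ t : V,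
      (t = A s ∨ t = B s ∨ t = s) → (t = A s' ∨ t = B s' ∨ t = s') → False := by
    intro s hs s' hs' hss t ht ht'
    obtain ⟨a1, a2, a3, a4, a5, a6, a7, a8⟩ := facts s hs
    obtain ⟨b1, b2, b3, b4, b5, b6, b7, b8⟩ := facts s' hs'
    have hAs : A s ≠ s' := by
      intro h; rw [h] at a4; omega
    have hBB : B s = B s' → False := by
      intro h
      have h3' : F.Adj (B s) s' := by rw [h]; exact b3
      have hBc : B s ≠ c := by
        intro he; rw [he, SimpleGraph.dist_self] at a5; omega
      have hd3 : 3 ≤ F.degree (B s) := deg3 _ _ _ _ a2.symm a3 h3' a8 hAs hss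
      have := hc (B s) hBc
      omega
    rcases ht with he | he | he <;> rcases ht' with he' | he' | he' <;>
      have h := he.symm.trans he'
    · -- A s = A s'
      by_cases hB : B s = B s'
      · exact hBB hB
      · have hcBs : c ≠ B s := by
          intro hx; rw [← hx, SimpleGraph.dist_self] at a5; omega
        have hcBs' : c ≠ B s' := by
          intro hx; rw [← hx, SimpleGraph.dist_self] at b5; omega
        have hd3 : 3 ≤ F.degree (A s) :=
          deg3 _ _ _ _ a1.symm a2 (by rw [h]; exact b2) hcBs hcBs' hB
        have := hc (A s) a1.ne'
        omega
    · rw [h] at a4; omega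
    · exact hAs h
    · rw [h] at a5; omega
    · exact hBB h
    · rw [h] at a5; omega
    · rw [h] at a6; omega
    · rw [h] at a6; omega
    · exact hss h
  have disjCS : ∀ s ∈ S, ∀ t : V,
      (t = u ∨ t = c ∨ t = v) → (t = A s ∨ t = B s ∨ t = s) → False := by
    intro s hs t ht ht'
    obtain ⟨a1, a2, a3, a4, a5, a6, a7, a8⟩ := facts s hs
    have hu1 := hu.2.1
    have hu2 := hu.2.2
    have hv1 := hv.2.1
    have hv2 := hv.2.2
    rcases ht with he | he | he <;> rcases ht' with he' | he' | he' <;>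
      have h := he.symm.trans he'
    · rw [h] at hu1; omega
    · rw [h] at hu2; omega
    · rw [h] at hu2; omega
    · exact a1.ne' h.symm
    · rw [← h, SimpleGraph.dist_self] at a5; omega
    · rw [← h, SimpleGraph.dist_self] at a6; omega
    · rw [h] at hv1; omega
    · rw [h] at hv2; omega
    · rw [h] at hv2; omega
  -- the selector map into the clique side
  have hm : ∀ w : V, ∃ i : Fin r₂, w ∈ insert c S → ∃ t : V,
      ((w = c ∧ (t = u ∨ t = c ∨ t = v)) ∨ (w ≠ c ∧ (t = A w ∨ t = B w ∨ t = w))) ∧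
      f t = Sum.inl i := by
    intro w
    by_cases hwmem : w ∈ insert c S
    · by_cases hwc : w = c
      · obtain ⟨i, hi⟩ := key u c v hcu.symm hcv huv
        rcases hi with hi | hi | hi
        · exact ⟨i, fun _ => ⟨u, Or.inl ⟨hwc, Or.inl rfl⟩, hi⟩⟩
        · exact ⟨i, fun _ => ⟨c, Or.inl ⟨hwc, Or.inr (Or.inl rfl)⟩, hi⟩⟩
        · exact ⟨i, fun _ => ⟨v, Or.inl ⟨hwc, Or.inr (Or.inr rfl)⟩, hi⟩⟩
      · have hwS : w ∈ S := by
          rcases Finset.mem_insert.mp hwmem with h | h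
          · exact absurd h hwc
          · exact h
        obtain ⟨a1, a2, a3, a4, a5, a6, a7, a8⟩ := facts w hwS
        obtain ⟨i, hi⟩ := key (A w) (B w) w a2 a3 a8
        rcases hi with hi | hi | hi
        · exact ⟨i, fun _ => ⟨A w, Or.inr ⟨hwc, Or.inl rfl⟩, hi⟩⟩
        · exact ⟨i, fun _ => ⟨B w, Or.inr ⟨hwc, Or.inr (Or.inl rfl)⟩, hi⟩⟩
        · exact ⟨i, fun _ => ⟨w, Or.inr ⟨hwc, Or.inr (Or.inr rfl)⟩, hi⟩⟩
    · exact ⟨⟨0, hr₂⟩, fun h => absurd h hwmem⟩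
  choose m hmspec using hm
  -- pigeonhole
  have hcS : c ∉ S := by
    rw [hS, Finset.mem_filter]
    rintro ⟨-, -, h⟩
    rw [SimpleGraph.dist_self] at h
    omega
  have hcard : (Finset.univ : Finset (Fin r₂)).card < (insert c S).card := by
    rw [Finset.card_insert_of_notMem hcS, Finset.card_univ, Fintype.card_fin, ← hr₂card]
    omega
  obtain ⟨w, hw, w', hw', hne, heq⟩ :=
    Finset.exists_ne_map_eq_of_card_lt_of_maps_to hcard (fun w _ => Finset.mem_univ (m w))
  obtain ⟨t, htw, hft⟩ := hmspec w hw
  obtain ⟨t', htw', hft'⟩ := hmspec w' hw'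
  have htt : t = t' := hf (by rw [hft, hft', heq])
  subst htt
  have hwS : w ≠ c → w ∈ S := fun h => by
    rcases Finset.mem_insert.mp hw with h' | h'
    · exact absurd h' h
    · exact h'
  have hw'S : w' ≠ c → w' ∈ S := fun h => by
    rcases Finset.mem_insert.mp hw' with h' | h'
    · exact absurd h' h
    · exact h'
  rcases htw with ⟨hwc, hts⟩ | ⟨hwc, hts⟩ <;> rcases htw' with ⟨hw'c, hts'⟩ | ⟨hw'c, hts'⟩
  · exact hne (hwc.trans hw'c.symm)
  · exact disjCS w' (hw'S hw'c) t hts hts'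
  · exact disjCS w (hwS hwc) t hts' hts
  · exact disjSS w (hwS hwc) w' (hw'S hw'c) hne t hts hts'
end

section
/- Let F be a tree on ℓ vertices (ℓ odd) with bipartition A, B, |A| ≤ |B|, such that β(F) = (ℓ-1)/2 and every vertex of A has degree at least 2. Then every F-free graph G on n vertices that contains a spanning complete bipartite subgraph K_{q,n-q} with q = (ℓ-3)/2 (small part S of size q) satisfies: the graph induced by G on the large part V(G)\S has at most one edge, i.e., G is a subgraph of S_{n,(ℓ-3)/2}^1. -/
open SimpleGraph

section AuxLemmas

open Finset

variable {V : Type*} [Fintype V] [DecidableEq V] {F : SimpleGraph V} [DecidableRel F.Adj]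
  {A : Finset V}

set_option linter.unusedSectionVars false

lemma aux_sumA (F : SimpleGraph V) [DecidableRel F.Adj]
    (A : Finset V) (hxor : ∀ ⦃u v⦄, F.Adj u v → (u ∈ A ↔ v ∉ A)) :
    ∑ a ∈ A, F.degree a = F.edgeFinset.card := by
  classical
  have h1 : (univ.filter (fun d : F.Dart => d.fst ∈ A)).card = ∑ a ∈ A, F.degree a := by
    rw [Finset.card_eq_sum_card_fiberwise (f := fun d : F.Dart => d.fst) (s := univ.filter (fun d : F.Dart => d.fst ∈ A)) (t := A)
      (fun d hd => (mem_filter.mp hd).2)]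
    refine Finset.sum_congr rfl fun a ha => ?_
    rw [← F.dart_fst_fiber_card_eq_degree a]
    congr 1
    ext d
    simp only [mem_filter, mem_univ, true_and, and_iff_right_iff_imp]
    rintro rfl; exact ha
  rw [← h1]
  apply Finset.card_bij (fun d _ => d.edge)
  · intro d hd; exact mem_edgeFinset.mpr d.edge_mem
  · intro d₁ h₁ d₂ h₂ he
    rcases (F.dart_edge_eq_iff d₁ d₂).mp he with rfl | rfl
    · rfl
    · exfalso
      simp only [mem_filter, mem_univ, true_and] at h₁ h₂
      exact (hxor d₂.adj).mp h₂ h₁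
  · intro e he
    rw [mem_edgeFinset] at he
    induction e with
    | _ x y =>
      rw [mem_edgeSet] at he
      by_cases hx : x ∈ A
      · exact ⟨⟨(x,y), he⟩, by simpa using hx, rfl⟩
      · have hy : y ∈ A := by have := hxor he; tauto
        refine ⟨⟨(y,x), he.symm⟩, by simpa using hy, ?_⟩
        simp [Dart.edge, Sym2.eq_swap]

lemma aux_walk_parity (hxor : ∀ ⦃u v⦄, F.Adj u v → (u ∈ A ↔ v ∉ A))
    {u v : V} (p : F.Walk u v) : ((u ∈ A) ↔ (v ∈ A)) ↔ Even p.length := by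
  induction p with
  | nil => simp
  | @cons u w v h p ih =>
    have h2 := hxor h
    simp only [Walk.length_cons, Nat.even_add_one, ← ih]
    tauto

lemma aux_dist_parity (hconn : F.Connected) (hxor : ∀ ⦃u v⦄, F.Adj u v → (u ∈ A ↔ v ∉ A))
    (r u : V) : ((r ∈ A) ↔ (u ∈ A)) ↔ Even (F.dist r u) := by
  obtain ⟨p, hp⟩ := hconn.exists_walk_length_eq_dist r u
  rw [← hp]
  exact aux_walk_parity hxor p

lemma aux_adj_dist (hconn : F.Connected) (hxor : ∀ ⦃u v⦄, F.Adj u v → (u ∈ A ↔ v ∉ A))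
    {r u v : V} (h : F.Adj u v) :
    F.dist r v = F.dist r u + 1 ∨ F.dist r u = F.dist r v + 1 := by
  have h1 : F.dist r v ≤ F.dist r u + 1 := by
    have := hconn.dist_triangle (u := r) (v := u) (w := v)
    rwa [dist_eq_one_iff_adj.mpr h] at this
  have h2 : F.dist r u ≤ F.dist r v + 1 := by
    have := hconn.dist_triangle (u := r) (v := v) (w := u)
    rwa [dist_eq_one_iff_adj.mpr h.symm] at this
  have p1 := aux_dist_parity hconn hxor r u
  have p2 := aux_dist_parity hconn hxor r v
  have p3 := hxor h
  have hne : F.dist r u ≠ F.dist r v := by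
    intro he
    rw [he] at p1
    tauto
  omega

lemma aux_unique_closer (hF : F.IsTree) {r v u₁ u₂ : V}
    (h₁ : F.Adj u₁ v) (h₂ : F.Adj u₂ v)
    (hd₁ : F.dist r u₁ + 1 = F.dist r v) (hd₂ : F.dist r u₂ + 1 = F.dist r v) : u₁ = u₂ := by
  obtain ⟨p₁, hp₁⟩ := hF.isConnected.exists_walk_length_eq_dist r u₁
  obtain ⟨p₂, hp₂⟩ := hF.isConnected.exists_walk_length_eq_dist r u₂
  have hw₁ : (p₁.concat h₁).IsPath := by
    apply Walk.isPath_of_length_eq_dist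
    rw [Walk.length_concat, hp₁, hd₁]
  have hw₂ : (p₂.concat h₂).IsPath := by
    apply Walk.isPath_of_length_eq_dist
    rw [Walk.length_concat, hp₂, hd₂]
  have := (hF.existsUnique_path r v).unique hw₁ hw₂
  obtain ⟨hv, -⟩ := Walk.concat_inj this
  exact hv

lemma aux_noC4 (hF : F.IsTree) {a a' b b' : V} (haa : a ≠ a') (hbb : b ≠ b')
    (h1 : F.Adj a b) (h2 : F.Adj a b') (h3 : F.Adj a' b) (h4 : F.Adj a' b') : False := by
  have hp1 : (Walk.cons h1.symm (Walk.cons h2 Walk.nil) : F.Walk b b').IsPath := by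
    simp [Walk.isPath_def, h1.ne', h2.ne, hbb]
  have hp2 : (Walk.cons h3.symm (Walk.cons h4 Walk.nil) : F.Walk b b').IsPath := by
    simp [Walk.isPath_def, h3.ne', h4.ne, hbb]
  have := (hF.existsUnique_path b b').unique hp1 hp2
  have := congrArg Walk.support this
  simp at this
  exact haa this

lemma aux_goodb (hF : F.IsTree)
    (hxor : ∀ ⦃u v⦄, F.Adj u v → (u ∈ A ↔ v ∉ A))
    (B : Finset V)
    (hnbrA : ∀ b ∈ B, ∀ c, F.Adj b c → c ∈ A)
    (hnbrB : ∀ a ∈ A, ∀ c, F.Adj a c → c ∈ B)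
    (hB2ne : ∃ b ∈ B, 2 ≤ F.degree b) :
    ∃ b₁ ∈ B, 2 ≤ F.degree b₁ ∧ ∃ a₁ a₂, a₁ ≠ a₂ ∧ F.Adj b₁ a₁ ∧ F.Adj b₁ a₂ ∧
      ∀ a, F.Adj b₁ a → a ≠ a₁ → a ≠ a₂ → ∀ c, F.Adj a c → c ≠ b₁ → F.degree c ≤ 1 := by
  classical
  obtain ⟨b₀, hb₀B, hb₀2⟩ := hB2ne
  have hconn := hF.isConnected
  set B₂ : Finset V := B.filter (fun b => 2 ≤ F.degree b) with hB₂
  have hB₂ne : B₂.Nonempty := ⟨b₀, by simp [hB₂, hb₀B, hb₀2]⟩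
  obtain ⟨b₁, hb₁mem, hb₁max⟩ := Finset.exists_max_image B₂ (F.dist b₀) hB₂ne
  rw [hB₂, mem_filter] at hb₁mem
  obtain ⟨hb₁B, hb₁2⟩ := hb₁mem
  set bad : Finset V := (F.neighborFinset b₁).filter
    (fun a => F.dist b₀ a + 1 = F.dist b₀ b₁) with hbad
  have hbad1 : bad.card ≤ 1 := by
    rw [Finset.card_le_one]
    intro a ha a' ha'
    rw [hbad, mem_filter, mem_neighborFinset] at ha ha'
    exact aux_unique_closer hF ha.1.symm ha'.1.symm ha.2 ha'.2
  have hnbcard : 1 < (F.neighborFinset b₁).card := by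
    rwa [card_neighborFinset_eq_degree]
  have hmain : ∃ a₁ a₂, a₁ ≠ a₂ ∧ a₁ ∈ F.neighborFinset b₁ ∧ a₂ ∈ F.neighborFinset b₁ ∧
      bad ⊆ {a₁, a₂} := by
    rcases bad.eq_empty_or_nonempty with he | ⟨a₁, ha₁⟩
    · obtain ⟨a₁, h₁, a₂, h₂, hne⟩ := Finset.one_lt_card.mp hnbcard
      exact ⟨a₁, a₂, hne, h₁, h₂, by simp [he]⟩
    · have ha₁nb : a₁ ∈ F.neighborFinset b₁ := (mem_filter.mp ha₁).1
      obtain ⟨a₂, ha₂nb, hne⟩ := Finset.exists_mem_ne hnbcard a₁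
      refine ⟨a₁, a₂, fun h => hne h.symm, ha₁nb, ha₂nb, ?_⟩
      intro x hx
      have : x = a₁ := Finset.card_le_one.mp hbad1 x hx a₁ ha₁
      simp [this]
  obtain ⟨a₁, a₂, hne, h₁, h₂, hsub⟩ := hmain
  rw [mem_neighborFinset] at h₁ h₂
  refine ⟨b₁, hb₁B, hb₁2, a₁, a₂, hne, h₁, h₂, ?_⟩
  intro a hadj hna₁ hna₂ c hac hcb
  have hanotbad : a ∉ bad := by
    intro h
    rcases Finset.mem_insert.mp (hsub h) with h' | h'
    · exact hna₁ h'
    · exact hna₂ (Finset.mem_singleton.mp h')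
  have hda : F.dist b₀ a = F.dist b₀ b₁ + 1 := by
    rcases aux_adj_dist hconn hxor (r := b₀) hadj with h | h
    · exact h
    · exfalso
      exact hanotbad (by rw [hbad, mem_filter, mem_neighborFinset]; exact ⟨hadj, h.symm⟩)
  have hdc : F.dist b₀ c = F.dist b₀ a + 1 := by
    rcases aux_adj_dist hconn hxor (r := b₀) hac with h | h
    · exact h
    · exfalso
      apply hcb
      exact aux_unique_closer hF (r := b₀) hac.symm hadj (by omega) (by omega)
  by_contra hdeg
  push_neg at hdeg
  have hcB : c ∈ B := by
    have haA : a ∈ A := hnbrA b₁ hb₁B a hadj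
    exact hnbrB a haA c hac
  have hcB₂ : c ∈ B₂ := by rw [hB₂, mem_filter]; exact ⟨hcB, hdeg⟩
  have := hb₁max c hcB₂
  omega

lemma aux_emb {V W : Type*} [Fintype V] [Fintype W] [DecidableEq V] [DecidableEq W]
    (F : SimpleGraph V) (G : SimpleGraph W) (S : Finset W)
    (hspan : ∀ v ∈ S, ∀ w, w ∉ S → G.Adj v w)
    (hVW : Fintype.card V ≤ Fintype.card W)
    (I P : Finset V) (p : V → W)
    (hIS : I.card = S.card)
    (hIP : Disjoint I P)
    (hpinj : Set.InjOn p P)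
    (hpS : ∀ v ∈ P, p v ∉ S)
    (hI : ∀ v ∈ I, ∀ w ∈ I, ¬ F.Adj v w)
    (hedge : ∀ ⦃v w⦄, F.Adj v w → v ∉ I → w ∉ I → v ∈ P ∧ w ∈ P ∧ G.Adj (p v) (p w)) :
    Contains F G := by
  classical
  set R : Finset V := (univ \ I) \ P with hR
  set T : Finset W := (univ \ S) \ P.image p with hT
  have hmemR : ∀ v, v ∉ I → v ∉ P → v ∈ R := by
    intro v h1 h2; simp [hR, h1, h2]
  have hRcard : R.card = Fintype.card V - I.card - P.card := by
    rw [hR, card_sdiff_of_subset (fun v hv => mem_sdiff.mpr ⟨mem_univ v, disjoint_right.mp hIP hv⟩),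
      card_sdiff_of_subset (subset_univ I), card_univ]
  have hTcard : T.card = Fintype.card W - S.card - P.card := by
    rw [hT, card_sdiff_of_subset (fun w hw => mem_sdiff.mpr ⟨mem_univ w, ?_⟩),
      card_sdiff_of_subset (subset_univ S), card_univ, card_image_of_injOn hpinj]
    obtain ⟨v, hv, rfl⟩ := mem_image.mp hw
    exact hpS v hv
  have hScard : S.card ≤ Fintype.card W := by
    simpa [card_univ] using card_le_card (subset_univ S)
  have hRT : R.card ≤ T.card := by rw [hRcard, hTcard]; omega
  let gI : {v // v ∈ I} → W := fun i => (S.equivFin.symm (Fin.cast hIS (I.equivFin i)) : W)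
  have hgI_mem : ∀ i, gI i ∈ S := fun i => (S.equivFin.symm _).2
  have hgI_inj : Function.Injective gI := by
    intro a b hab
    apply I.equivFin.injective
    apply Fin.cast_injective hIS
    apply S.equivFin.symm.injective
    exact Subtype.coe_injective hab
  let gR : {v // v ∈ R} → W := fun r => (T.equivFin.symm (Fin.castLE hRT (R.equivFin r)) : W)
  have hgR_mem : ∀ r, gR r ∈ T := fun r => (T.equivFin.symm _).2
  have hgR_inj : Function.Injective gR := by
    intro a b hab
    apply R.equivFin.injective
    apply Fin.castLE_injective hRT
    apply T.equivFin.symm.injective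
    exact Subtype.coe_injective hab
  let f : V → W := fun v =>
    if h : v ∈ I then gI ⟨v, h⟩
    else if h' : v ∈ P then p v
    else gR ⟨v, hmemR v h h'⟩
  have hfI : ∀ v (h : v ∈ I), f v = gI ⟨v, h⟩ := fun v h => dif_pos h
  have hfP : ∀ v, v ∉ I → v ∈ P → f v = p v := by
    intro v h1 h2; simp only [f, dif_neg h1, dif_pos h2]
  have hfR : ∀ v (h1 : v ∉ I) (h2 : v ∉ P), f v = gR ⟨v, hmemR v h1 h2⟩ := by
    intro v h1 h2; simp only [f, dif_neg h1, dif_neg h2]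
  have hfnotS : ∀ v, v ∉ I → f v ∉ S := by
    intro v h1
    by_cases h2 : v ∈ P
    · rw [hfP v h1 h2]; exact hpS v h2
    · rw [hfR v h1 h2]
      have := hgR_mem ⟨v, hmemR v h1 h2⟩
      rw [hT, mem_sdiff, mem_sdiff] at this
      exact this.1.2
  have hinj : Function.Injective f := by
    intro u v huv
    by_cases hu : u ∈ I <;> by_cases hv : v ∈ I
    · rw [hfI u hu, hfI v hv] at huv
      exact Subtype.mk_eq_mk.mp (hgI_inj huv)
    · exfalso
      rw [hfI u hu] at huv
      exact hfnotS v hv (huv ▸ hgI_mem ⟨u, hu⟩)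
    · exfalso
      rw [hfI v hv] at huv
      exact hfnotS u hu (huv.symm ▸ hgI_mem ⟨v, hv⟩)
    · by_cases hu' : u ∈ P <;> by_cases hv' : v ∈ P
      · rw [hfP u hu hu', hfP v hv hv'] at huv
        exact hpinj hu' hv' huv
      · exfalso
        rw [hfP u hu hu', hfR v hv hv'] at huv
        have := hgR_mem ⟨v, hmemR v hv hv'⟩
        rw [hT, mem_sdiff] at this
        exact this.2 (mem_image.mpr ⟨u, hu', huv⟩)
      · exfalso
        rw [hfP v hv hv', hfR u hu hu'] at huv
        have := hgR_mem ⟨u, hmemR u hu hu'⟩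
        rw [hT, mem_sdiff] at this
        exact this.2 (mem_image.mpr ⟨v, hv', huv.symm⟩)
      · rw [hfR u hu hu', hfR v hv hv'] at huv
        exact Subtype.mk_eq_mk.mp (hgR_inj huv)
  refine ⟨⟨f, ?_⟩, hinj⟩
  intro a b hab
  by_cases ha : a ∈ I
  · have hb : b ∉ I := fun hb => hI a ha b hb hab
    rw [hfI a ha]
    exact hspan _ (hgI_mem ⟨a, ha⟩) _ (hfnotS b hb)
  · by_cases hb : b ∈ I
    · rw [hfI b hb]
      exact (hspan _ (hgI_mem ⟨b, hb⟩) _ (hfnotS a ha)).symm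
    · obtain ⟨haP, hbP, hadj⟩ := hedge hab ha hb
      rw [hfP a ha haP, hfP b hb hbP]
      exact hadj

end AuxLemmas

/-- Let `F` be a tree on `ℓ` vertices (`ℓ` odd) with bipartition `A`, `B`, `|A| ≤ |B|`,
`β(F) = (ℓ-1)/2`, and every vertex of `A` of degree at least `2`. If `G` is an `F`-free
graph on `n ≥ ℓ` vertices containing a spanning complete bipartite subgraph `K_{q,n-q}`
with small part `S`, `|S| = q = (ℓ-3)/2`, then `G` induces at most one edge outside `S`;
i.e. `G` is a subgraph of `S_{n,(ℓ-3)/2}^1`. -/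
theorem stmt17 {V W : Type*} [Fintype V] [Fintype W] [DecidableEq V]
    (F : SimpleGraph V) [DecidableRel F.Adj] (hF : F.IsTree)
    (hℓ : 4 ≤ Fintype.card V) (hodd : Odd (Fintype.card V))
    (A B : Finset V) (hdisj : Disjoint A B) (hcover : ∀ v, v ∈ A ∨ v ∈ B)
    (hindA : ∀ v ∈ A, ∀ w ∈ A, ¬F.Adj v w)
    (hindB : ∀ v ∈ B, ∀ w ∈ B, ¬F.Adj v w)
    (hAB : A.card ≤ B.card)
    (hβ : 2 * coverNumber F + 1 = Fintype.card V)
    (hδ : ∀ x ∈ A, 2 ≤ F.degree x)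
    (q : ℕ) (hq : 2 * q + 3 = Fintype.card V)
    (G : SimpleGraph W) (hGfree : ¬ Contains F G)
    (hn : Fintype.card V ≤ Fintype.card W)
    (S : Finset W) (hS : S.card = q)
    (hspan : ∀ v ∈ S, ∀ w, w ∉ S → G.Adj v w) :
    {e : Sym2 W | e ∈ G.edgeSet ∧ ∀ v ∈ e, v ∉ S}.Subsingleton := by
  classical
  have hconn := hF.isConnected
  have hnotinA : ∀ v, v ∉ A → v ∈ B := fun v hv => (hcover v).resolve_left hv
  have hBnotA : ∀ v ∈ B, v ∉ A := fun v hv => Finset.disjoint_right.mp hdisj hv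
  have hAnotB : ∀ v ∈ A, v ∉ B := fun v hv => Finset.disjoint_left.mp hdisj hv
  have hxor : ∀ ⦃u v⦄, F.Adj u v → (u ∈ A ↔ v ∉ A) := by
    intro u v h
    constructor
    · intro hu hv
      exact hindA u hu v hv h
    · intro hv
      by_contra hu
      exact hindB u (hnotinA u hu) v (hnotinA v hv) h
  have hq1 : 1 ≤ q := by omega
  have hE : F.edgeFinset.card = 2*q+2 := by
    have := hF.card_edgeFinset
    omega
  have hcovle : coverNumber F ≤ A.card := by
    apply Nat.sInf_le
    refine ⟨A, ?_, rfl⟩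
    intro v w h
    rcases hcover v with h' | h'
    · exact Or.inl h'
    rcases hcover w with h'' | h''
    · exact Or.inr h''
    · exact absurd h (hindB v h' w h'')
  have hunion : A ∪ B = Finset.univ := by
    apply Finset.eq_univ_of_forall
    intro v
    rcases hcover v with h | h
    · exact Finset.mem_union_left _ h
    · exact Finset.mem_union_right _ h
  have hABsum : A.card + B.card = Fintype.card V := by
    rw [← Finset.card_union_of_disjoint hdisj, hunion, Finset.card_univ]
  have hAcard : A.card = q+1 := by omega
  have hBcard : B.card = q+2 := by omega
  have hsumA := aux_sumA F A hxor
  have hdeg2 : ∀ a ∈ A, F.degree a = 2 := by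
    intro a ha
    by_contra hne
    have hlt : ∑ _x ∈ A, 2 < ∑ x ∈ A, F.degree x :=
      Finset.sum_lt_sum (fun i hi => hδ i hi) ⟨a, ha, by have := hδ a ha; omega⟩
    rw [Finset.sum_const, smul_eq_mul] at hlt
    omega
  have hnbrB : ∀ a ∈ A, ∀ c, F.Adj a c → c ∈ B :=
    fun a ha c h => hnotinA c ((hxor h).mp ha)
  have hnbrA : ∀ b ∈ B, ∀ c, F.Adj b c → c ∈ A := by
    intro b hb c h
    by_contra hc
    exact hBnotA b hb ((hxor h).mpr hc)
  have hsumB : ∑ b ∈ B, F.degree b = 2*q+2 := by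
    have h2 := F.sum_degrees_eq_twice_card_edges
    have h3 : ∑ v, F.degree v = ∑ v ∈ A, F.degree v + ∑ v ∈ B, F.degree v := by
      rw [← Finset.sum_union hdisj, hunion]
    omega
  have hB2 : ∃ b ∈ B, 2 ≤ F.degree b := by
    by_contra h
    push_neg at h
    have : ∑ b ∈ B, F.degree b ≤ ∑ _b ∈ B, 1 :=
      Finset.sum_le_sum (fun i hi => by have := h i hi; omega)
    rw [Finset.sum_const, smul_eq_mul] at this
    omega
  have hpair : ∀ a ∈ A, ∀ b, F.Adj a b → ∃ c, c ≠ b ∧ F.Adj a c ∧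
      F.neighborFinset a = {b, c} := by
    intro a ha b hb
    have h2 : (F.neighborFinset a).card = 2 := by
      rw [F.card_neighborFinset_eq_degree]; exact hdeg2 a ha
    obtain ⟨u, v, huv, hset⟩ := Finset.card_eq_two.mp h2
    have hbmem : b ∈ F.neighborFinset a := (F.mem_neighborFinset a b).mpr hb
    rw [hset] at hbmem
    rcases Finset.mem_insert.mp hbmem with rfl | h'
    · refine ⟨v, fun h => huv h.symm, ?_, by rw [hset]⟩
      rw [← F.mem_neighborFinset, hset]
      simp
    · rw [Finset.mem_singleton] at h'
      subst h'
      refine ⟨u, fun h => huv h, ?_, by rw [hset, Finset.pair_comm]⟩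
      rw [← F.mem_neighborFinset, hset]
      simp
  -- Case A : a path with 3 vertices outside S
  have caseA : ∀ x y z : W, x ∉ S → y ∉ S → z ∉ S → x ≠ z → G.Adj x y → G.Adj y z → False := by
    intro x y z hxS hyS hzS hxz hxy hyz
    obtain ⟨a₀, ha₀⟩ := Finset.card_pos.mp (show 0 < A.card by omega)
    have h2 : (F.neighborFinset a₀).card = 2 := by
      rw [F.card_neighborFinset_eq_degree]; exact hdeg2 a₀ ha₀
    obtain ⟨b₁, b₂, hb12, hset⟩ := Finset.card_eq_two.mp h2
    have hadj1 : F.Adj a₀ b₁ := by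
      rw [← F.mem_neighborFinset, hset]; simp
    have hadj2 : F.Adj a₀ b₂ := by
      rw [← F.mem_neighborFinset, hset]; simp
    have hb₁B := hnbrB a₀ ha₀ b₁ hadj1
    have hb₂B := hnbrB a₀ ha₀ b₂ hadj2
    have hb₁a : b₁ ≠ a₀ := fun h => hBnotA b₁ hb₁B (h ▸ ha₀)
    have hb₂a : b₂ ≠ a₀ := fun h => hBnotA b₂ hb₂B (h ▸ ha₀)
    set p : V → W := fun v => if v = a₀ then y else if v = b₁ then x else z with hp
    have pv1 : p a₀ = y := by simp [hp]
    have pv2 : p b₁ = x := by simp [hp, hb₁a]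
    have pv3 : p b₂ = z := by simp [hp, hb₂a, hb12.symm]
    have d1 : y ≠ x := hxy.ne'
    have d2 : y ≠ z := hyz.ne
    apply hGfree
    apply aux_emb F G S hspan hn (A.erase a₀) {a₀, b₁, b₂} p
    · rw [Finset.card_erase_of_mem ha₀, hAcard, hS]
      omega
    · rw [Finset.disjoint_left]
      intro v hv hvP
      have hvA : v ∈ A := Finset.mem_of_mem_erase hv
      have hvne : v ≠ a₀ := Finset.ne_of_mem_erase hv
      simp only [Finset.mem_insert, Finset.mem_singleton] at hvP
      rcases hvP with rfl | rfl | rfl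
      · exact hvne rfl
      · exact hBnotA _ hb₁B hvA
      · exact hBnotA _ hb₂B hvA
    · intro u hu v hv huv
      simp only [Finset.coe_insert, Set.mem_insert_iff, Finset.coe_singleton,
        Set.mem_singleton_iff] at hu hv
      rcases hu with rfl | rfl | rfl <;> rcases hv with rfl | rfl | rfl <;>
        simp only [pv1, pv2, pv3] at huv <;>
        first
          | rfl
          | exact absurd huv d1
          | exact absurd huv d2
          | exact absurd huv hxz
          | exact absurd huv.symm d1
          | exact absurd huv.symm d2
          | exact absurd huv.symm hxz
    · intro v hv
      simp only [Finset.mem_insert, Finset.mem_singleton] at hv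
      rcases hv with rfl | rfl | rfl
      · rwa [pv1]
      · rwa [pv2]
      · rwa [pv3]
    · intro v hv w hw
      exact hindA v (Finset.mem_of_mem_erase hv) w (Finset.mem_of_mem_erase hw)
    · intro v w hvw hvI hwI
      have key : ∀ u u', F.Adj u u' → u ∈ A → u ∉ A.erase a₀ → u' ∉ A.erase a₀ →
          u ∈ ({a₀, b₁, b₂} : Finset V) ∧ u' ∈ ({a₀, b₁, b₂} : Finset V) ∧
            G.Adj (p u) (p u') := by
        intro u u' h hA hI1 _hI2
        have hu : u = a₀ := by
          by_contra hne
          exact hI1 (Finset.mem_erase.mpr ⟨hne, hA⟩)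
        subst hu
        have hmem : u' ∈ F.neighborFinset u := (F.mem_neighborFinset u u').mpr h
        rw [hset] at hmem
        rcases Finset.mem_insert.mp hmem with rfl | h'
        · refine ⟨by simp, by simp, ?_⟩
          rw [pv1, pv2]; exact hxy.symm
        · rw [Finset.mem_singleton] at h'
          subst h'
          refine ⟨by simp, by simp, ?_⟩
          rw [pv1, pv3]; exact hyz
      rcases hcover v with hv | hv
      · exact key v w hvw hv hvI hwI
      · have hwA : w ∈ A := hnbrA v hv w hvw
        obtain ⟨h1, h2, h3⟩ := key w v hvw.symm hwA hwI hvI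
        exact ⟨h2, h1, h3.symm⟩
  -- Case B : two disjoint edges outside S
  have caseB : ∀ x y z w : W, x ∉ S → y ∉ S → z ∉ S → w ∉ S →
      x ≠ y → x ≠ z → x ≠ w → y ≠ z → y ≠ w → z ≠ w →
      G.Adj x y → G.Adj z w → False := by
    intro x y z w hxS hyS hzS hwS d1 d2 d3 d4 d5 d6 hxy hzw
    obtain ⟨b₁, hb₁B, hb₁2, a₁, a₂, ha12, hba₁, hba₂, hleaf⟩ :=
      aux_goodb hF hxor B hnbrA hnbrB hB2
    have ha₁A : a₁ ∈ A := hnbrA b₁ hb₁B a₁ hba₁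
    have ha₂A : a₂ ∈ A := hnbrA b₁ hb₁B a₂ hba₂
    obtain ⟨c₁, hc₁ne, hac₁, hset₁⟩ := hpair a₁ ha₁A b₁ hba₁.symm
    obtain ⟨c₂, hc₂ne, hac₂, hset₂⟩ := hpair a₂ ha₂A b₁ hba₂.symm
    have hc₁B : c₁ ∈ B := hnbrB a₁ ha₁A c₁ hac₁
    have hc₂B : c₂ ∈ B := hnbrB a₂ ha₂A c₂ hac₂
    have hc₁₂ : c₁ ≠ c₂ := by
      intro h
      exact aux_noC4 hF ha12 hc₁ne.symm hba₁.symm hac₁ hba₂.symm (h ▸ hac₂)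
    set N' : Finset V := ((F.neighborFinset b₁).erase a₁).erase a₂ with hN'
    have hN'mem : ∀ a ∈ N', F.Adj b₁ a ∧ a ≠ a₁ ∧ a ≠ a₂ := by
      intro a ha
      rw [hN', Finset.mem_erase, Finset.mem_erase, F.mem_neighborFinset] at ha
      exact ⟨ha.2.2, ha.2.1, ha.1⟩
    have hN'A : ∀ a ∈ N', a ∈ A := fun a ha => hnbrA b₁ hb₁B a (hN'mem a ha).1
    set L : Finset V := N'.biUnion (fun a => (F.neighborFinset a).erase b₁) with hL
    have hLmem : ∀ c ∈ L, ∃ a ∈ N', F.Adj a c ∧ c ≠ b₁ := by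
      intro c hc
      rw [hL, Finset.mem_biUnion] at hc
      obtain ⟨a, ha, hc'⟩ := hc
      rw [Finset.mem_erase, F.mem_neighborFinset] at hc'
      exact ⟨a, ha, hc'.2, hc'.1⟩
    have hLdeg : ∀ c ∈ L, F.degree c ≤ 1 := by
      intro c hc
      obtain ⟨a, ha, hac, hcb⟩ := hLmem c hc
      obtain ⟨hb₁a, hne₁, hne₂⟩ := hN'mem a ha
      exact hleaf a hb₁a hne₁ hne₂ c hac hcb
    have hLB : ∀ c ∈ L, c ∈ B := by
      intro c hc
      obtain ⟨a, ha, hac, _⟩ := hLmem c hc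
      exact hnbrB a (hN'A a ha) c hac
    have hb₁L : b₁ ∉ L := fun h => (hLmem b₁ h).choose_spec.2.2 rfl
    have hdle : F.degree b₁ ≤ q + 1 := by
      rw [← F.card_neighborFinset_eq_degree]
      calc (F.neighborFinset b₁).card ≤ A.card :=
            Finset.card_le_card (fun c hc => hnbrA b₁ hb₁B c ((F.mem_neighborFinset b₁ c).mp hc))
        _ = q + 1 := hAcard
    have hN'card : N'.card = F.degree b₁ - 2 := by
      rw [hN', Finset.card_erase_of_mem
          (Finset.mem_erase.mpr ⟨ha12.symm, (F.mem_neighborFinset b₁ a₂).mpr hba₂⟩),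
        Finset.card_erase_of_mem ((F.mem_neighborFinset b₁ a₁).mpr hba₁),
        F.card_neighborFinset_eq_degree]
      omega
    have hLcard : L.card = N'.card := by
      rw [hL, Finset.card_biUnion]
      · calc ∑ a ∈ N', ((F.neighborFinset a).erase b₁).card = ∑ _a ∈ N', 1 := by
              apply Finset.sum_congr rfl
              intro a ha
              rw [Finset.card_erase_of_mem ((F.mem_neighborFinset a b₁).mpr (hN'mem a ha).1.symm),
                F.card_neighborFinset_eq_degree, hdeg2 a (hN'A a ha)]
          _ = N'.card := by rw [Finset.sum_const, smul_eq_mul, mul_one]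
      · intro u hu v hv huv
        rw [Function.onFun, Finset.disjoint_left]
        intro c hc1 hc2
        rw [Finset.mem_erase, F.mem_neighborFinset] at hc1 hc2
        exact aux_noC4 hF huv (Ne.symm hc1.1) (hN'mem u hu).1.symm hc1.2
          (hN'mem v hv).1.symm hc2.2
    set I : Finset V := (A \ F.neighborFinset b₁) ∪ insert b₁ L with hI_def
    have hApartB : Disjoint (A \ F.neighborFinset b₁) (insert b₁ L) := by
      rw [Finset.disjoint_right]
      intro v hv hv2
      have hvA := (Finset.mem_sdiff.mp hv2).1
      rcases Finset.mem_insert.mp hv with rfl | hv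
      · exact hBnotA v hb₁B hvA
      · exact hBnotA v (hLB v hv) hvA
    have hNsubA : F.neighborFinset b₁ ⊆ A :=
      fun c hc => hnbrA b₁ hb₁B c ((F.mem_neighborFinset b₁ c).mp hc)
    have hIcard : I.card = q := by
      rw [hI_def, Finset.card_union_of_disjoint hApartB, Finset.card_sdiff_of_subset hNsubA,
        Finset.card_insert_of_notMem hb₁L, hLcard, hN'card, hAcard,
        F.card_neighborFinset_eq_degree]
      omega
    set p : V → W := fun v => if v = a₁ then x else if v = c₁ then y else
      if v = a₂ then z else w with hp
    have hca₁ : c₁ ≠ a₁ := fun h => hBnotA c₁ hc₁B (h ▸ ha₁A)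
    have ha₂a₁ : a₂ ≠ a₁ := ha12.symm
    have ha₂c₁ : a₂ ≠ c₁ := fun h => hBnotA c₁ hc₁B (h ▸ ha₂A)
    have hc₂a₁ : c₂ ≠ a₁ := fun h => hBnotA c₂ hc₂B (h ▸ ha₁A)
    have hc₂c₁ : c₂ ≠ c₁ := hc₁₂.symm
    have hc₂a₂ : c₂ ≠ a₂ := fun h => hBnotA c₂ hc₂B (h ▸ ha₂A)
    have pv1 : p a₁ = x := by simp [hp]
    have pv2 : p c₁ = y := by simp [hp, hca₁]
    have pv3 : p a₂ = z := by simp [hp, ha₂a₁, ha₂c₁]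
    have pv4 : p c₂ = w := by simp [hp, hc₂a₁, hc₂c₁, hc₂a₂]
    have hb₁I : b₁ ∈ I := by
      rw [hI_def]
      exact Finset.mem_union_right _ (Finset.mem_insert_self _ _)
    have ha₁I : a₁ ∉ I := by
      rw [hI_def, Finset.mem_union, Finset.mem_insert]
      rintro (h | h | h)
      · exact (Finset.mem_sdiff.mp h).2 ((F.mem_neighborFinset b₁ a₁).mpr hba₁)
      · exact hBnotA b₁ hb₁B (h ▸ ha₁A)
      · exact hBnotA a₁ (hLB a₁ h) ha₁A
    have ha₂I : a₂ ∉ I := by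
      rw [hI_def, Finset.mem_union, Finset.mem_insert]
      rintro (h | h | h)
      · exact (Finset.mem_sdiff.mp h).2 ((F.mem_neighborFinset b₁ a₂).mpr hba₂)
      · exact hBnotA b₁ hb₁B (h ▸ ha₂A)
      · exact hBnotA a₂ (hLB a₂ h) ha₂A
    have hc₁I : c₁ ∉ I := by
      rw [hI_def, Finset.mem_union, Finset.mem_insert]
      rintro (h | h | h)
      · exact hBnotA c₁ hc₁B (Finset.mem_sdiff.mp h).1
      · exact hc₁ne h
      · obtain ⟨a, ha, hac, _⟩ := hLmem c₁ h
        exact aux_noC4 hF (hN'mem a ha).2.1 (Ne.symm hc₁ne) (hN'mem a ha).1.symm hac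
          hba₁.symm hac₁
    have hc₂I : c₂ ∉ I := by
      rw [hI_def, Finset.mem_union, Finset.mem_insert]
      rintro (h | h | h)
      · exact hBnotA c₂ hc₂B (Finset.mem_sdiff.mp h).1
      · exact hc₂ne h
      · obtain ⟨a, ha, hac, _⟩ := hLmem c₂ h
        exact aux_noC4 hF (hN'mem a ha).2.2 (Ne.symm hc₂ne) (hN'mem a ha).1.symm hac
          hba₂.symm hac₂
    have cross : ∀ u ∈ A \ F.neighborFinset b₁, ∀ v ∈ insert b₁ L, ¬ F.Adj u v := by
      intro u hu v hv hadj
      have huA := (Finset.mem_sdiff.mp hu).1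
      have hunb := (Finset.mem_sdiff.mp hu).2
      rcases Finset.mem_insert.mp hv with rfl | hv
      · exact hunb ((F.mem_neighborFinset v u).mpr hadj.symm)
      · obtain ⟨a, ha, hav, _⟩ := hLmem v hv
        have hua : u ≠ a :=
          fun h => hunb (h ▸ ((F.mem_neighborFinset b₁ a).mpr (hN'mem a ha).1))
        have hsubnb : ({a, u} : Finset V) ⊆ F.neighborFinset v := by
          intro t ht
          rcases Finset.mem_insert.mp ht with rfl | ht
          · exact (F.mem_neighborFinset v t).mpr hav.symm
          · rw [Finset.mem_singleton] at ht
            subst ht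
            exact (F.mem_neighborFinset v t).mpr hadj.symm
        have h2 : 2 ≤ F.degree v := by
          rw [← F.card_neighborFinset_eq_degree]
          calc 2 = ({a, u} : Finset V).card := (Finset.card_pair hua.symm).symm
            _ ≤ (F.neighborFinset v).card := Finset.card_le_card hsubnb
        have := hLdeg v hv
        omega
    apply hGfree
    apply aux_emb F G S hspan hn I {a₁, c₁, a₂, c₂} p
    · rw [hIcard, hS]
    · rw [Finset.disjoint_right]
      intro v hv
      simp only [Finset.mem_insert, Finset.mem_singleton] at hv
      rcases hv with rfl | rfl | rfl | rfl
      · exact ha₁I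
      · exact hc₁I
      · exact ha₂I
      · exact hc₂I
    · intro u hu v hv huv
      simp only [Finset.coe_insert, Set.mem_insert_iff, Finset.coe_singleton,
        Set.mem_singleton_iff] at hu hv
      rcases hu with rfl | rfl | rfl | rfl <;> rcases hv with rfl | rfl | rfl | rfl <;>
        simp only [pv1, pv2, pv3, pv4] at huv <;>
        first
          | rfl
          | exact absurd huv d1
          | exact absurd huv d2
          | exact absurd huv d3
          | exact absurd huv d4
          | exact absurd huv d5
          | exact absurd huv d6
          | exact absurd huv.symm d1
          | exact absurd huv.symm d2
          | exact absurd huv.symm d3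
          | exact absurd huv.symm d4
          | exact absurd huv.symm d5
          | exact absurd huv.symm d6
    · intro v hv
      simp only [Finset.mem_insert, Finset.mem_singleton] at hv
      rcases hv with rfl | rfl | rfl | rfl
      · rwa [pv1]
      · rwa [pv2]
      · rwa [pv3]
      · rwa [pv4]
    · intro u hu v hv hadj
      rw [hI_def, Finset.mem_union] at hu hv
      have hB' : ∀ t, t ∈ insert b₁ L → t ∈ B := by
        intro t ht
        rcases Finset.mem_insert.mp ht with rfl | ht
        · exact hb₁B
        · exact hLB t ht
      rcases hu with hu | hu <;> rcases hv with hv | hv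
      · exact hindA u (Finset.mem_sdiff.mp hu).1 v (Finset.mem_sdiff.mp hv).1 hadj
      · exact cross u hu v hv hadj
      · exact cross v hv u hu hadj.symm
      · exact hindB u (hB' u hu) v (hB' v hv) hadj
    · intro u v huv huI hvI
      have key : ∀ s t, F.Adj s t → s ∈ A → s ∉ I → t ∉ I →
          s ∈ ({a₁, c₁, a₂, c₂} : Finset V) ∧ t ∈ ({a₁, c₁, a₂, c₂} : Finset V) ∧
            G.Adj (p s) (p t) := by
        intro s t hst hsA hsI htI
        have hsnb : s ∈ F.neighborFinset b₁ := by
          by_contra h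
          exact hsI (by
            rw [hI_def, Finset.mem_union]
            exact Or.inl (Finset.mem_sdiff.mpr ⟨hsA, h⟩))
        rcases eq_or_ne s a₁ with rfl | hs1
        · have hmem : t ∈ F.neighborFinset s := (F.mem_neighborFinset s t).mpr hst
          rw [hset₁] at hmem
          rcases Finset.mem_insert.mp hmem with rfl | h'
          · exact absurd hb₁I htI
          · rw [Finset.mem_singleton] at h'
            subst h'
            refine ⟨by simp, by simp, ?_⟩
            rw [pv1, pv2]
            exact hxy
        rcases eq_or_ne s a₂ with rfl | hs2
        · have hmem : t ∈ F.neighborFinset s := (F.mem_neighborFinset s t).mpr hst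
          rw [hset₂] at hmem
          rcases Finset.mem_insert.mp hmem with rfl | h'
          · exact absurd hb₁I htI
          · rw [Finset.mem_singleton] at h'
            subst h'
            refine ⟨by simp, by simp, ?_⟩
            rw [pv3, pv4]
            exact hzw
        · exfalso
          have hsN' : s ∈ N' := by
            rw [hN']
            exact Finset.mem_erase.mpr ⟨hs2, Finset.mem_erase.mpr ⟨hs1, hsnb⟩⟩
          have hmem : t ∈ F.neighborFinset s := (F.mem_neighborFinset s t).mpr hst
          rcases eq_or_ne t b₁ with rfl | ht
          · exact htI hb₁I
          · apply htI
            rw [hI_def]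
            apply Finset.mem_union_right
            apply Finset.mem_insert_of_mem
            rw [hL]
            exact Finset.mem_biUnion.mpr ⟨s, hsN', Finset.mem_erase.mpr ⟨ht, hmem⟩⟩
      rcases hcover u with hu | hu
      · exact key u v huv hu huI hvI
      · have hvA : v ∈ A := hnbrA u hu v huv
        obtain ⟨h1, h2, h3⟩ := key v u huv.symm hvA hvI huI
        exact ⟨h2, h1, h3.symm⟩
  -- Final assembly
  intro e₁ he₁ e₂ he₂
  simp only [Set.mem_setOf_eq] at he₁ he₂
  by_contra hne
  revert he₁ he₂ hne
  refine Sym2.inductionOn₂ e₁ e₂ ?_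
  intro x y z w he₁ he₂ hne
  obtain ⟨hxy', hS1⟩ := he₁
  obtain ⟨hzw', hS2⟩ := he₂
  rw [mem_edgeSet] at hxy' hzw'
  have hxS : x ∉ S := hS1 x (Sym2.mem_mk_left x y)
  have hyS : y ∉ S := hS1 y (Sym2.mem_mk_right x y)
  have hzS : z ∉ S := hS2 z (Sym2.mem_mk_left z w)
  have hwS : w ∉ S := hS2 w (Sym2.mem_mk_right z w)
  have hne' : ¬((x = z ∧ y = w) ∨ (x = w ∧ y = z)) := by
    rw [← Sym2.eq_iff]
    exact hne
  rcases eq_or_ne x z with rfl | hxz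
  · have hyw : y ≠ w := fun h => hne' (Or.inl ⟨rfl, h⟩)
    exact caseA y x w hyS hxS hwS hyw hxy'.symm hzw'
  rcases eq_or_ne x w with rfl | hxw
  · have hyz : y ≠ z := fun h => hne' (Or.inr ⟨rfl, h⟩)
    exact caseA y x z hyS hxS hzS hyz hxy'.symm hzw'.symm
  rcases eq_or_ne y z with rfl | hyz
  · exact caseA x y w hxS hyS hwS hxw hxy' hzw'
  rcases eq_or_ne y w with rfl | hyw
  · exact caseA x y z hxS hyS hzS hxz hxy' hzw'.symm
  · exact caseB x y z w hxS hyS hzS hwS hxy'.ne hxz hxw hyz hyw hzw'.ne hxy' hzw'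
end
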